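/- arXiv:2602.23025 — 3 statements merged into one kernel-verified Lean document; each statement's English description precedes it below -/
import Mathlib

section
/- Let p ∈ ℕ and let g : (0,∞) → ℝ lie in D^p ∩ K^p. If f₁, f₂ : (0,∞) → ℝ both lie in K^p and satisfy Δf₁ = g and Δf₂ = g on (0,∞), then f₁ − f₂ is a constant function. -/
open Finset Filter

/-- Forward difference operator: `Δ f x = f (x + 1) - f x`. -/
noncomputable def fdiff (f : ℝ → ℝ) : ℝ → ℝ := fun x => f (x + 1) - f x

/-- Generalized binomial coefficient `C(x, j) = x (x-1) ⋯ (x-j+1) / j!`. -/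
noncomputable def gbinom (x : ℝ) (j : ℕ) : ℝ :=
  (∏ i ∈ Finset.range j, (x - i)) / (Nat.factorial j)

/-- Divided difference of `f` at the points `x 0, …, x (n-1)`. -/
noncomputable def divDiff (f : ℝ → ℝ) {n : ℕ} (x : Fin n → ℝ) : ℝ :=
  ∑ i, f (x i) / ∏ j ∈ Finset.univ.erase i, (x i - x j)

/-- `f` is `p`-convex on the set `S`: every divided difference of `f`
at `p + 2` pairwise distinct points of `S` is nonnegative. -/
def ConvexOrderOn (f : ℝ → ℝ) (p : ℕ) (S : Set ℝ) : Prop :=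
  ∀ x : Fin (p + 2) → ℝ, (∀ i, x i ∈ S) → Function.Injective x → 0 ≤ divDiff f x

/-- The class `K^p`: functions that are eventually `p`-convex or eventually `p`-concave. -/
def EvK (p : ℕ) (f : ℝ → ℝ) : Prop :=
  (∃ a > (0 : ℝ), ConvexOrderOn f p (Set.Ioi a)) ∨
    (∃ a > (0 : ℝ), ConvexOrderOn (fun x => -f x) p (Set.Ioi a))

/-- The class `D^p`: functions with `Δ^p f (n) → 0` as `n → ∞` along the integers. -/
def DD (p : ℕ) (f : ℝ → ℝ) : Prop :=
  Filter.Tendsto (fun n : ℕ => (fdiff^[p] f) n) Filter.atTop (nhds 0)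

/-- The digamma function `ψ = Γ'/Γ`. -/
noncomputable def digamma (x : ℝ) : ℝ := deriv Real.Gamma x / Real.Gamma x

/-- A multiple-gamma sequence: `G 0 = id`, `G (m+1) (x+1) = G m x * G (m+1) x`,
`G m 1 = 1`, each `G m` is positive and `C^∞` on `(0,∞)`, and the `m`-th derivative
of `ln ∘ G m` is increasing on `(0,∞)`. -/
def IsMultipleGammaSeq (G : ℕ → ℝ → ℝ) : Prop :=
  (∀ m, ∀ x > (0 : ℝ), 0 < G m x) ∧
  (∀ m, ContDiffOn ℝ (⊤ : ℕ∞) (G m) (Set.Ioi 0)) ∧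
  (∀ x > (0 : ℝ), G 0 x = x) ∧
  (∀ m, ∀ x > (0 : ℝ), G (m + 1) (x + 1) = G m x * G (m + 1) x) ∧
  (∀ m, G m 1 = 1) ∧
  (∀ m, StrictMonoOn
    (iteratedDerivWithin m (fun x => Real.log (G m x)) (Set.Ioi 0)) (Set.Ioi 0))

namespace StmtAux

open Polynomial


lemma fdiff_eq_fwdDiff : fdiff = fwdDiff (1 : ℝ) := rfl

lemma fdiff_iter_eq_sum (f : ℝ → ℝ) (k : ℕ) (y : ℝ) :
    fdiff^[k] f y = ∑ i ∈ range (k + 1), ((-1 : ℝ) ^ (k - i) * (k.choose i)) * f (y + i) := by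
  rw [fdiff_eq_fwdDiff, fwdDiff_iter_eq_sum_shift]
  refine Finset.sum_congr rfl fun i _ => ?_
  rw [zsmul_eq_mul]
  push_cast
  rw [nsmul_eq_mul, mul_one]

lemma fdiff_iter_congr {F G : ℝ → ℝ} (h : ∀ y > 0, F y = G y) (k : ℕ) {y : ℝ} (hy : 0 < y) :
    fdiff^[k] F y = fdiff^[k] G y := by
  rw [fdiff_iter_eq_sum, fdiff_iter_eq_sum]
  refine Finset.sum_congr rfl fun i _ => ?_
  rw [h (y + i) (by positivity)]

lemma shift_eq (f : ℝ → ℝ) (k : ℕ) (y : ℝ) :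
    f (y + k) = ∑ j ∈ range (k + 1), (k.choose j : ℝ) * fdiff^[j] f y := by
  have := shift_eq_sum_fwdDiff_iter (1 : ℝ) f k y
  rw [nsmul_eq_mul, mul_one] at this
  rw [this]
  refine Finset.sum_congr rfl fun j _ => ?_
  rw [nsmul_eq_mul, fdiff_eq_fwdDiff]

lemma divDiff_neg (f : ℝ → ℝ) {n : ℕ} (w : Fin n → ℝ) :
    divDiff (fun y => -f y) w = - divDiff f w := by
  simp [divDiff, neg_div, Finset.sum_neg_distrib]

lemma fdiff_iter_neg (f : ℝ → ℝ) (k : ℕ) (y : ℝ) :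
    fdiff^[k] (fun y => -f y) y = - fdiff^[k] f y := by
  rw [fdiff_iter_eq_sum, fdiff_iter_eq_sum, ← Finset.sum_neg_distrib]
  exact Finset.sum_congr rfl fun i _ => by ring


noncomputable def newton (f : ℝ → ℝ) (ν : ℝ) (k : ℕ) : ℝ[X] :=
  ∑ j ∈ range (k + 1), C (fdiff^[j] f ν / (Nat.factorial j)) * ∏ i ∈ range j, (X - C (ν + i))

lemma monic_prodXsubC {s : Finset ℕ} (w : ℕ → ℝ) : (∏ i ∈ s, (X - C (w i))).Monic :=
  monic_prod_of_monic _ _ fun j _ => monic_X_sub_C _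

lemma natDegree_prodXsubC {s : Finset ℕ} (w : ℕ → ℝ) :
    (∏ i ∈ s, (X - C (w i))).natDegree = s.card := by
  rw [natDegree_prod_of_monic _ _ fun j _ => monic_X_sub_C _]
  simp

lemma natDegree_newton (f : ℝ → ℝ) (ν : ℝ) (k : ℕ) : (newton f ν k).natDegree ≤ k := by
  refine natDegree_sum_le_of_forall_le _ _ fun j hj => ?_
  refine le_trans (natDegree_mul_le) ?_
  rw [natDegree_C, natDegree_prodXsubC (fun i => ν + i)]
  simp only [zero_add, Finset.card_range]
  exact Nat.lt_succ_iff.mp (mem_range.mp hj)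

lemma coeff_newton_self (f : ℝ → ℝ) (ν : ℝ) (k : ℕ) :
    (newton f ν k).coeff k = fdiff^[k] f ν / (Nat.factorial k) := by
  unfold newton
  rw [finset_sum_coeff, Finset.sum_eq_single k]
  · rw [coeff_C_mul]
    have h := (monic_prodXsubC (s := range k) (fun i => ν + i))
    have hd := natDegree_prodXsubC (s := range k) (fun i => ν + i)
    rw [Finset.card_range] at hd
    have h1 : (∏ i ∈ range k, (X - C (ν + (i:ℝ)))).coeff k = 1 := by nth_rewrite 2 [← hd]; exact h.coeff_natDegree
    rw [h1, mul_one]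
  · intro j hj hne
    rw [coeff_C_mul]
    have : (∏ i ∈ range j, (X - C (ν + i))).natDegree < k := by
      rw [natDegree_prodXsubC (fun i => ν + i), Finset.card_range]
      rcases Nat.lt_or_ge j k with h | h
      · exact h
      · exact absurd (le_antisymm (Nat.lt_succ_iff.mp (mem_range.mp hj)) h) hne
    rw [coeff_eq_zero_of_natDegree_lt this, mul_zero]
  · intro h; exact absurd (self_mem_range_succ k) h

lemma coeff_newton_succ (f : ℝ → ℝ) (ν : ℝ) (k : ℕ) : (newton f ν k).coeff (k + 1) = 0 :=
  coeff_eq_zero_of_natDegree_lt (Nat.lt_succ_of_le (natDegree_newton f ν k))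

lemma eval_newton (f : ℝ → ℝ) (ν : ℝ) (k t : ℕ) (ht : t ≤ k) :
    (newton f ν k).eval (ν + t) = f (ν + t) := by
  unfold newton
  rw [eval_finset_sum]
  have hterm : ∀ j ∈ range (k + 1),
      eval (ν + t) (C (fdiff^[j] f ν / (Nat.factorial j)) * ∏ i ∈ range j, (X - C (ν + i)))
        = if j ∈ range (t + 1) then (t.choose j : ℝ) * fdiff^[j] f ν else 0 := by
    intro j _
    rw [eval_mul, eval_C, eval_prod]
    simp only [eval_sub, eval_X, eval_C]
    have hprod : ∀ i ∈ range j, (ν + t - (ν + i)) = ((t : ℝ) - i) := fun i _ => by ring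
    rw [Finset.prod_congr rfl hprod]
    by_cases hjt : j ∈ range (t + 1)
    · rw [if_pos hjt]
      have hjt' : j ≤ t := Nat.lt_succ_iff.mp (mem_range.mp hjt)
      have : ∏ i ∈ range j, ((t : ℝ) - i) = (t.descFactorial j : ℝ) := by
        rw [Nat.descFactorial_eq_prod_range]
        push_cast
        refine (Finset.prod_congr rfl fun i hi => ?_)
        rw [Nat.cast_sub (le_of_lt (lt_of_lt_of_le (mem_range.mp hi) hjt'))]
      rw [this, Nat.descFactorial_eq_factorial_mul_choose]
      push_cast
      field_simp
    · rw [if_neg hjt]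
      have hjt' : t < j := by
        simp only [mem_range, not_lt] at hjt; omega
      rw [Finset.prod_eq_zero (mem_range.mpr hjt') (by ring), mul_zero]
  rw [Finset.sum_congr rfl hterm, Finset.sum_ite_mem, Finset.inter_eq_right.mpr
    (Finset.range_subset_range.mpr (by omega))]
  exact (shift_eq f t ν).symm


lemma monic_prodXsubC' {ι : Type*} [DecidableEq ι] {s : Finset ι} (w : ι → ℝ) :
    (∏ i ∈ s, (X - C (w i))).Monic :=
  monic_prod_of_monic _ _ fun j _ => monic_X_sub_C _

lemma natDegree_prodXsubC' {ι : Type*} [DecidableEq ι] {s : Finset ι} (w : ι → ℝ) :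
    (∏ i ∈ s, (X - C (w i))).natDegree = s.card := by
  rw [natDegree_prod_of_monic _ _ fun j _ => monic_X_sub_C _]
  simp

lemma coeff_prodXsubC_card {ι : Type*} [DecidableEq ι] {s : Finset ι} (w : ι → ℝ) :
    (∏ i ∈ s, (X - C (w i))).coeff s.card = 1 := by
  have h := (monic_prodXsubC' (s := s) w)
  have hd := natDegree_prodXsubC' (s := s) w
  rw [← hd]
  exact h.coeff_natDegree

lemma coeff_interpolate {m : ℕ} (w : Fin (m + 1) → ℝ) (hw : Function.Injective w) (f : ℝ → ℝ) :
    (Lagrange.interpolate univ w (fun i => f (w i))).coeff m = divDiff f w := by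
  rw [Lagrange.interpolate_apply, finset_sum_coeff]
  unfold divDiff
  refine Finset.sum_congr rfl fun i _ => ?_
  have hb : Lagrange.basis univ w i
      = C (∏ j ∈ univ.erase i, (w i - w j))⁻¹ * ∏ j ∈ univ.erase i, (X - C (w j)) := by
    unfold Lagrange.basis Lagrange.basisDivisor
    rw [Finset.prod_mul_distrib, ← map_prod, Finset.prod_inv_distrib]
  rw [hb, ← mul_assoc, ← C_mul, coeff_C_mul]
  have hcard : (univ.erase i).card = m := by
    rw [Finset.card_erase_of_mem (mem_univ i), Finset.card_univ, Fintype.card_fin]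
    omega
  have hc := coeff_prodXsubC_card (s := univ.erase i) w
  rw [hcard] at hc
  rw [hc, mul_one, div_eq_mul_inv, mul_comm]

lemma interp_sub {m : ℕ} (P Q : ℝ[X]) (w : Fin m → ℝ) (hw : Function.Injective w)
    (hP : P.natDegree ≤ m) (hQ : Q.natDegree ≤ m) (h : ∀ i, P.eval (w i) = Q.eval (w i)) :
    P - Q = C (P.coeff m - Q.coeff m) * ∏ i, (X - C (w i)) := by
  set Pr : ℝ[X] := ∏ i, (X - C (w i)) with hPr
  have hmonic : Pr.Monic := monic_prodXsubC' w
  have hdeg : Pr.natDegree = m := by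
    rw [hPr, natDegree_prodXsubC' w, Finset.card_univ, Fintype.card_fin]
  have hcoeffPr : Pr.coeff m = 1 := by nth_rewrite 1 [← hdeg]; exact hmonic.coeff_natDegree
  set R : ℝ[X] := P - Q - C (P.coeff m - Q.coeff m) * Pr with hR
  have hR0 : R = 0 := by
    by_contra hne
    have hdR : R.natDegree ≤ m := by
      refine le_trans (natDegree_sub_le _ _) (max_le (le_trans (natDegree_sub_le _ _)
        (max_le hP hQ)) ?_)
      refine le_trans (natDegree_mul_le) ?_
      rw [natDegree_C, hdeg, zero_add]
    have hcoeff : R.coeff m = 0 := by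
      rw [hR, coeff_sub, coeff_sub, coeff_C_mul, hcoeffPr]
      ring
    have hne' : R.natDegree ≠ m := by
      intro hEq
      rw [← hEq] at hcoeff
      exact (Polynomial.leadingCoeff_ne_zero.mpr hne) hcoeff
    refine hne (Polynomial.eq_zero_of_natDegree_lt_card_of_eval_eq_zero R hw (fun i => ?_) ?_)
    · rw [hR]
      simp only [eval_sub, eval_mul, eval_C, h i]
      have : Pr.eval (w i) = 0 := by
        rw [hPr, eval_prod]
        exact Finset.prod_eq_zero (mem_univ i) (by simp)
      rw [this]; ring
    · rw [Fintype.card_fin]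
      exact lt_of_le_of_ne hdR hne'
  have := sub_eq_zero.mp hR0
  linear_combination this


/-! ### Node configurations -/

noncomputable def nodeA (ν : ℝ) (p : ℕ) : Fin (p + 2) → ℝ := fun i => ν + i
noncomputable def nodeB (ν x : ℝ) (p : ℕ) : Fin (p + 2) → ℝ :=
  fun i => if (i : ℕ) < p + 1 then ν + i else ν + x
noncomputable def nodeC (ν x : ℝ) (p : ℕ) : Fin (p + 2) → ℝ :=
  fun i => if (i : ℕ) < p + 1 then ν + 1 + i else ν + x

lemma cast_ne {x : ℝ} (hx : 0 < x) (hx1 : x < 1) (i : ℕ) : (i : ℝ) ≠ x := by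
  rcases Nat.eq_zero_or_pos i with rfl | hi
  · simpa using hx.ne
  · have : (1 : ℝ) ≤ i := by exact_mod_cast hi
    linarith

lemma nodeA_inj (ν : ℝ) (p : ℕ) : Function.Injective (nodeA ν p) := by
  intro i j h
  simp only [nodeA, add_right_inj, Nat.cast_inj] at h
  exact Fin.ext h

lemma nodeB_inj (ν : ℝ) {x : ℝ} (p : ℕ) (hx : 0 < x) (hx1 : x < 1) :
    Function.Injective (nodeB ν x p) := by
  intro i j h
  unfold nodeB at h
  split_ifs at h with h1 h2 h2
  · exact Fin.ext (by exact_mod_cast add_left_cancel h)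
  · have hc : (((i : ℕ)) : ℝ) = x := by linarith
    exact absurd hc (cast_ne hx hx1 i)
  · have hc : (((j : ℕ)) : ℝ) = x := by linarith
    exact absurd hc (cast_ne hx hx1 j)
  · exact Fin.ext (by omega)

lemma nodeC_inj (ν : ℝ) {x : ℝ} (p : ℕ) (hx : 0 < x) (hx1 : x < 1) :
    Function.Injective (nodeC ν x p) := by
  intro i j h
  unfold nodeC at h
  split_ifs at h with h1 h2 h2
  · exact Fin.ext (by exact_mod_cast add_left_cancel h)
  · have hc : (((i : ℕ) + 1 : ℕ) : ℝ) = x := by push_cast; linarith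
    exact absurd hc (cast_ne hx hx1 _)
  · have hc : (((j : ℕ) + 1 : ℕ) : ℝ) = x := by push_cast; linarith
    exact absurd hc (cast_ne hx hx1 _)
  · exact Fin.ext (by omega)

lemma natDegree_le_of_degree_lt {P : ℝ[X]} {m : ℕ} (h : P.degree < ((m + 1 : ℕ) : WithBot ℕ)) :
    P.natDegree ≤ m := by
  rcases eq_or_ne P 0 with rfl | h0
  · simp
  · exact Nat.lt_succ_iff.mp ((natDegree_lt_iff_degree_lt h0).mpr h)

lemma natDegree_interpolate_le {m : ℕ} (w : Fin (m + 1) → ℝ) (hw : Function.Injective w)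
    (r : Fin (m + 1) → ℝ) : (Lagrange.interpolate univ w r).natDegree ≤ m := by
  have h := Lagrange.degree_interpolate_lt (s := (univ : Finset (Fin (m+1)))) r hw.injOn
  rw [Finset.card_univ, Fintype.card_fin] at h
  exact natDegree_le_of_degree_lt h

lemma eval_interp_node {m : ℕ} (w : Fin m → ℝ) (hw : Function.Injective w) (f : ℝ → ℝ)
    (i : Fin m) :
    (Lagrange.interpolate univ w (fun j => f (w j))).eval (w i) = f (w i) :=
  Lagrange.eval_interpolate_at_node _ hw.injOn (mem_univ i)

/-! ### The three key identities -/

lemma remainder_id (f : ℝ → ℝ) (p : ℕ) (ν x : ℝ) (hx : 0 < x) (hx1 : x < 1) :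
    f (ν + x) = (∑ j ∈ range (p + 1), gbinom x j * fdiff^[j] f ν)
      + divDiff f (nodeB ν x p) * ∏ i ∈ range (p + 1), (x - (i : ℝ)) := by
  set w := nodeB ν x p with hwdef
  have hw : Function.Injective w := nodeB_inj ν p hx hx1
  set P := Lagrange.interpolate univ w (fun i => f (w i)) with hPdef
  have hPdeg : P.natDegree ≤ p + 1 := natDegree_interpolate_le w hw _
  have hPcoeff : P.coeff (p + 1) = divDiff f w := coeff_interpolate w hw f
  set u : Fin (p + 1) → ℝ := fun i => ν + i with hudef
  have hu : Function.Injective u := by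
    intro i j h
    simp only [hudef, add_right_inj, Nat.cast_inj] at h
    exact Fin.ext h
  have heval : ∀ i : Fin (p + 1), P.eval (u i) = (newton f ν p).eval (u i) := by
    intro i
    set i' : Fin (p + 2) := ⟨i.1, by omega⟩ with hi'def
    have hwi : w i' = u i := by
      simp only [hwdef, nodeB, hi'def, hudef]
      rw [if_pos i.2]
    have h1 := eval_interp_node w hw f i'
    rw [hwi] at h1
    rw [h1]
    have hui : u i = ν + ((i : ℕ) : ℝ) := rfl
    rw [hui, eval_newton f ν p i.1 (by omega)]
  have key := interp_sub P (newton f ν p) u hu hPdeg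
    (le_trans (natDegree_newton f ν p) (by omega)) heval
  have hev := congrArg (eval (ν + x)) key
  have hPs : P.eval (ν + x) = f (ν + x) := by
    set i' : Fin (p + 2) := ⟨p + 1, by omega⟩ with hi'def
    have hwlast : w i' = ν + x := by
      simp only [hwdef, nodeB, hi'def]
      rw [if_neg (by simp)]
    have h1 := eval_interp_node w hw f i'
    rw [hwlast] at h1
    exact h1
  have hNs : (newton f ν p).eval (ν + x) = ∑ j ∈ range (p + 1), gbinom x j * fdiff^[j] f ν := by
    unfold newton
    rw [eval_finset_sum]
    refine Finset.sum_congr rfl fun j _ => ?_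
    rw [eval_mul, eval_C, eval_prod]
    have : ∏ i ∈ range j, eval (ν + x) (X - C (ν + i)) = ∏ i ∈ range j, (x - i) := by
      refine Finset.prod_congr rfl fun i _ => ?_
      simp only [eval_sub, eval_X, eval_C]; ring
    rw [this, gbinom]
    ring
  have hprod : eval (ν + x) (∏ i : Fin (p + 1), (X - C (u i)))
      = ∏ i ∈ range (p + 1), (x - (i : ℝ)) := by
    rw [eval_prod, ← Fin.prod_univ_eq_prod_range (fun i : ℕ => x - (i : ℝ))]
    refine Finset.prod_congr rfl fun i _ => ?_
    simp only [eval_sub, eval_X, eval_C, hudef]; ring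
  rw [eval_sub, eval_mul, eval_C, hPs, hNs, hprod, coeff_newton_succ, hPcoeff] at hev
  linear_combination hev

lemma divDiff_nodeA (f : ℝ → ℝ) (p : ℕ) (ν : ℝ) :
    divDiff f (nodeA ν p) = fdiff^[p + 1] f ν / (Nat.factorial (p + 1)) := by
  set w := nodeA ν p with hwdef
  have hw : Function.Injective w := nodeA_inj ν p
  set P := Lagrange.interpolate univ w (fun i => f (w i)) with hPdef
  have hPdeg : P.natDegree ≤ p + 1 := natDegree_interpolate_le w hw _
  have hPcoeff : P.coeff (p + 1) = divDiff f w := coeff_interpolate w hw f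
  have heval : ∀ i : Fin (p + 2), P.eval (w i) = (newton f ν (p + 1)).eval (w i) := by
    intro i
    rw [eval_interp_node w hw f i]
    have hwi : w i = ν + ((i : ℕ) : ℝ) := rfl
    rw [hwi, eval_newton f ν (p + 1) i.1 (by omega)]
  have key := interp_sub P (newton f ν (p + 1)) w hw
    (le_trans hPdeg (by omega)) (le_trans (natDegree_newton f ν (p + 1)) (by omega)) heval
  have hcP : P.coeff (p + 2) = 0 := coeff_eq_zero_of_natDegree_lt (by omega)
  have hcN : (newton f ν (p + 1)).coeff (p + 2) = 0 := coeff_newton_succ f ν (p + 1)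
  rw [hcP, hcN, sub_zero, map_zero, zero_mul, sub_eq_zero] at key
  rw [← hPcoeff, key, coeff_newton_self]

lemma exchange_id (f : ℝ → ℝ) (p : ℕ) (ν x : ℝ) (hx : 0 < x) (hx1 : x < 1) :
    x * divDiff f (nodeB ν x p) + ((p : ℝ) + 1 - x) * divDiff f (nodeC ν x p)
      = ((p : ℝ) + 1) * divDiff f (nodeA ν p) := by
  set wA := nodeA ν p with hwAdef
  set wB := nodeB ν x p with hwBdef
  set wC := nodeC ν x p with hwCdef
  have hwA : Function.Injective wA := nodeA_inj ν p
  have hwB : Function.Injective wB := nodeB_inj ν p hx hx1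
  have hwC : Function.Injective wC := nodeC_inj ν p hx hx1
  set PA := Lagrange.interpolate univ wA (fun i => f (wA i)) with hPAdef
  set PB := Lagrange.interpolate univ wB (fun i => f (wB i)) with hPBdef
  set PC := Lagrange.interpolate univ wC (fun i => f (wC i)) with hPCdef
  have hAdeg : PA.natDegree ≤ p + 1 := natDegree_interpolate_le wA hwA _
  have hBdeg : PB.natDegree ≤ p + 1 := natDegree_interpolate_le wB hwB _
  have hCdeg : PC.natDegree ≤ p + 1 := natDegree_interpolate_le wC hwC _
  have hAc : PA.coeff (p + 1) = divDiff f wA := coeff_interpolate wA hwA f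
  have hBc : PB.coeff (p + 1) = divDiff f wB := coeff_interpolate wB hwB f
  have hCc : PC.coeff (p + 1) = divDiff f wC := coeff_interpolate wC hwC f
  set u : Fin (p + 1) → ℝ := fun i => ν + i with hudef
  set u' : Fin (p + 1) → ℝ := fun i => ν + 1 + i with hu'def
  have hu : Function.Injective u := by
    intro i j h
    simp only [hudef, add_right_inj, Nat.cast_inj] at h
    exact Fin.ext h
  have hu' : Function.Injective u' := by
    intro i j h
    simp only [hu'def, add_right_inj, Nat.cast_inj] at h
    exact Fin.ext h
  have heval1 : ∀ i : Fin (p + 1), PA.eval (u i) = PB.eval (u i) := by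
    intro i
    set iA : Fin (p + 2) := ⟨i.1, by omega⟩ with hiAdef
    have hwAi : wA iA = u i := rfl
    have hwBi : wB iA = u i := by
      simp only [hwBdef, nodeB, hiAdef, hudef]
      rw [if_pos i.2]
    have h1 := eval_interp_node wA hwA f iA
    have h2 := eval_interp_node wB hwB f iA
    rw [hwAi] at h1; rw [hwBi] at h2
    rw [h1, h2]
  have key1 := interp_sub PA PB u hu hAdeg hBdeg heval1
  have heval2 : ∀ i : Fin (p + 1), PA.eval (u' i) = PC.eval (u' i) := by
    intro i
    set iA : Fin (p + 2) := ⟨i.1 + 1, by omega⟩ with hiAdef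
    set iC : Fin (p + 2) := ⟨i.1, by omega⟩ with hiCdef
    have hwAi : wA iA = u' i := by
      show ν + ((i.1 + 1 : ℕ) : ℝ) = ν + 1 + ((i.1 : ℕ) : ℝ)
      push_cast; ring
    have hwCi : wC iC = u' i := by
      simp only [hwCdef, nodeC, hiCdef, hu'def]
      rw [if_pos i.2]
    have h1 := eval_interp_node wA hwA f iA
    have h2 := eval_interp_node wC hwC f iC
    rw [hwAi] at h1; rw [hwCi] at h2
    rw [h1, h2]
  have key2 := interp_sub PA PC u' hu' hAdeg hCdeg heval2
  have hPBs : PB.eval (ν + x) = f (ν + x) := by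
    set i' : Fin (p + 2) := ⟨p + 1, by omega⟩ with hi'def
    have hwlast : wB i' = ν + x := by
      simp only [hwBdef, nodeB, hi'def]
      rw [if_neg (by simp)]
    have h2 := eval_interp_node wB hwB f i'
    rw [hwlast] at h2; exact h2
  have hPCs : PC.eval (ν + x) = f (ν + x) := by
    set i' : Fin (p + 2) := ⟨p + 1, by omega⟩ with hi'def
    have hwlast : wC i' = ν + x := by
      simp only [hwCdef, nodeC, hi'def]
      rw [if_neg (by simp)]
    have h2 := eval_interp_node wC hwC f i'
    rw [hwlast] at h2; exact h2
  have hev1 := congrArg (eval (ν + x)) key1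
  have hev2 := congrArg (eval (ν + x)) key2
  have hprod1 : eval (ν + x) (∏ i : Fin (p + 1), (X - C (u i)))
      = ∏ i ∈ range (p + 1), (x - (i : ℝ)) := by
    rw [eval_prod, ← Fin.prod_univ_eq_prod_range (fun i : ℕ => x - (i : ℝ))]
    refine Finset.prod_congr rfl fun i _ => ?_
    simp only [eval_sub, eval_X, eval_C, hudef]; ring
  have hprod2 : eval (ν + x) (∏ i : Fin (p + 1), (X - C (u' i)))
      = ∏ i ∈ range (p + 1), (x - 1 - (i : ℝ)) := by
    rw [eval_prod, ← Fin.prod_univ_eq_prod_range (fun i : ℕ => x - 1 - (i : ℝ))]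
    refine Finset.prod_congr rfl fun i _ => ?_
    simp only [eval_sub, eval_X, eval_C, hu'def]; ring
  rw [eval_sub, eval_mul, eval_C, hprod1, hPBs, hAc, hBc] at hev1
  rw [eval_sub, eval_mul, eval_C, hprod2, hPCs, hAc, hCc] at hev2
  set Pi0 : ℝ := ∏ i ∈ range p, (x - 1 - (i : ℝ)) with hPi0def
  have hsplit1 : ∏ i ∈ range (p + 1), (x - (i : ℝ)) = x * Pi0 := by
    rw [Finset.prod_range_succ']
    have hc : ∀ i ∈ range p, (x - ((i + 1 : ℕ) : ℝ)) = (x - 1 - (i : ℝ)) := by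
      intro i _; push_cast; ring
    rw [Finset.prod_congr rfl hc]
    push_cast
    ring
  have hsplit2 : ∏ i ∈ range (p + 1), (x - 1 - (i : ℝ)) = Pi0 * (x - 1 - p) := by
    rw [Finset.prod_range_succ]
  have hPi0ne : Pi0 ≠ 0 := by
    refine Finset.prod_ne_zero_iff.mpr fun i _ => ?_
    have hge : (0 : ℝ) ≤ i := Nat.cast_nonneg i
    intro hcontra
    nlinarith
  rw [hsplit1] at hev1
  rw [hsplit2] at hev2
  have hcomb : (divDiff f wA - divDiff f wB) * (x * Pi0)
      = (divDiff f wA - divDiff f wC) * (Pi0 * (x - 1 - (p : ℝ))) := by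
    rw [← hev1, ← hev2]
  have hkey := mul_right_cancel₀ hPi0ne (show
    ((divDiff f wA - divDiff f wB) * x) * Pi0
      = ((divDiff f wA - divDiff f wC) * (x - 1 - (p : ℝ))) * Pi0 by linear_combination hcomb)
  linear_combination -hkey


lemma fdiff_iter_succ_eq (f g : ℝ → ℝ) (hf : ∀ y > (0:ℝ), fdiff f y = g y) (k : ℕ) {y : ℝ}
    (hy : 0 < y) : fdiff^[k + 1] f y = fdiff^[k] g y := by
  rw [Function.iterate_succ_apply]
  exact fdiff_iter_congr hf k hy

lemma memA {a ν : ℝ} (hν : a < ν) (p : ℕ) (i : Fin (p + 2)) : nodeA ν p i ∈ Set.Ioi a := by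
  have : (0 : ℝ) ≤ ((i : ℕ) : ℝ) := Nat.cast_nonneg _
  simp only [nodeA, Set.mem_Ioi]
  linarith

lemma memB {a ν x : ℝ} (hν : a < ν) (hx : 0 < x) (p : ℕ) (i : Fin (p + 2)) :
    nodeB ν x p i ∈ Set.Ioi a := by
  have : (0 : ℝ) ≤ ((i : ℕ) : ℝ) := Nat.cast_nonneg _
  simp only [nodeB, Set.mem_Ioi]
  split_ifs <;> linarith

lemma memC {a ν x : ℝ} (hν : a < ν) (hx : 0 < x) (p : ℕ) (i : Fin (p + 2)) :
    nodeC ν x p i ∈ Set.Ioi a := by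
  have : (0 : ℝ) ≤ ((i : ℕ) : ℝ) := Nat.cast_nonneg _
  simp only [nodeC, Set.mem_Ioi]
  split_ifs <;> linarith

lemma tendsto_B_of_convex (p : ℕ) (f : ℝ → ℝ) {a : ℝ} (hcv : ConvexOrderOn f p (Set.Ioi a))
    (hD : Tendsto (fun n : ℕ => fdiff^[p + 1] f n) atTop (nhds 0))
    {x : ℝ} (hx : 0 < x) (hx1 : x < 1) :
    Tendsto (fun n : ℕ => divDiff f (nodeB (n : ℝ) x p)) atTop (nhds 0) := by
  have hA : Tendsto (fun n : ℕ => divDiff f (nodeA (n : ℝ) p)) atTop (nhds 0) := by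
    simp only [divDiff_nodeA]
    simpa using hD.div_const ((Nat.factorial (p + 1) : ℝ))
  have hEv : ∀ᶠ n : ℕ in atTop, a < (n : ℝ) := by
    filter_upwards [eventually_gt_atTop ⌈a⌉₊] with n hn
    calc a ≤ (⌈a⌉₊ : ℝ) := Nat.le_ceil a
    _ < n := by exact_mod_cast hn
  have hBnn : ∀ᶠ n : ℕ in atTop, 0 ≤ divDiff f (nodeB (n : ℝ) x p) := by
    filter_upwards [hEv] with n hn
    exact hcv _ (memB hn hx p) (nodeB_inj _ p hx hx1)
  have hupper : ∀ᶠ n : ℕ in atTop,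
      divDiff f (nodeB (n : ℝ) x p) ≤ ((p : ℝ) + 1) / x * divDiff f (nodeA (n : ℝ) p) := by
    filter_upwards [hEv] with n hn
    have hex := exchange_id f p (n : ℝ) x hx hx1
    have hC : 0 ≤ divDiff f (nodeC (n : ℝ) x p) :=
      hcv _ (memC hn hx p) (nodeC_inj _ p hx hx1)
    rw [div_mul_eq_mul_div, le_div_iff₀ hx]
    have h1 : 0 ≤ ((p : ℝ) + 1 - x) * divDiff f (nodeC (n : ℝ) x p) :=
      mul_nonneg (by push_cast; linarith) hC
    nlinarith [hex]
  have hglim : Tendsto (fun n : ℕ => ((p : ℝ) + 1) / x * divDiff f (nodeA (n : ℝ) p))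
      atTop (nhds 0) := by
    simpa using hA.const_mul (((p : ℝ) + 1) / x)
  exact tendsto_of_tendsto_of_tendsto_of_le_of_le' tendsto_const_nhds hglim hBnn hupper

lemma key_tendsto (p : ℕ) (f : ℝ → ℝ) (hK : EvK p f)
    (hD : Tendsto (fun n : ℕ => fdiff^[p + 1] f n) atTop (nhds 0))
    {x : ℝ} (hx : 0 < x) (hx1 : x < 1) :
    Tendsto (fun n : ℕ => f ((n : ℝ) + x) - ∑ j ∈ range (p + 1), gbinom x j * fdiff^[j] f n)
      atTop (nhds 0) := by
  have hrem : ∀ n : ℕ, f ((n : ℝ) + x) - ∑ j ∈ range (p + 1), gbinom x j * fdiff^[j] f n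
      = divDiff f (nodeB (n : ℝ) x p) * ∏ i ∈ range (p + 1), (x - (i : ℝ)) := fun n => by
    have := remainder_id f p (n : ℝ) x hx hx1
    linarith
  have hB : Tendsto (fun n : ℕ => divDiff f (nodeB (n : ℝ) x p)) atTop (nhds 0) := by
    rcases hK with ⟨a, _, hcv⟩ | ⟨a, _, hcv⟩
    · exact tendsto_B_of_convex p f hcv hD hx hx1
    · have hD' : Tendsto (fun n : ℕ => fdiff^[p + 1] (fun y => -f y) n) atTop (nhds 0) := by
        simp only [fdiff_iter_neg]
        simpa using hD.neg
      have h := tendsto_B_of_convex p (fun y => -f y) hcv hD' hx hx1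
      simp only [divDiff_neg] at h
      simpa using h.neg
  simp only [hrem]
  simpa using hB.mul_const (∏ i ∈ range (p + 1), (x - (i : ℝ)))


end StmtAux

open StmtAux

/-- Uniqueness up to an additive constant of `K^p` solutions to `Δ f = g`. -/
theorem stmt_1 (p : ℕ) (g : ℝ → ℝ) (hgD : DD p g) (hgK : EvK p g)
    (f₁ f₂ : ℝ → ℝ) (hf₁K : EvK p f₁) (hf₂K : EvK p f₂)
    (hf₁ : ∀ x > (0 : ℝ), fdiff f₁ x = g x) (hf₂ : ∀ x > (0 : ℝ), fdiff f₂ x = g x) :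
    ∃ c : ℝ, ∀ x > (0 : ℝ), f₁ x - f₂ x = c := by
  have hper : ∀ y : ℝ, 0 < y → f₁ (y + 1) - f₂ (y + 1) = f₁ y - f₂ y := by
    intro y hy
    have h1 := hf₁ y hy
    have h2 := hf₂ y hy
    simp only [fdiff] at h1 h2
    linarith
  have hD1 : Tendsto (fun n : ℕ => fdiff^[p + 1] f₁ n) atTop (nhds 0) := by
    refine hgD.congr' ?_
    filter_upwards [eventually_gt_atTop 0] with n hn
    exact (fdiff_iter_succ_eq f₁ g hf₁ p (by exact_mod_cast hn)).symm
  have hD2 : Tendsto (fun n : ℕ => fdiff^[p + 1] f₂ n) atTop (nhds 0) := by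
    refine hgD.congr' ?_
    filter_upwards [eventually_gt_atTop 0] with n hn
    exact (fdiff_iter_succ_eq f₂ g hf₂ p (by exact_mod_cast hn)).symm
  have key : ∀ y : ℝ, 0 < y → y < 1 → f₁ (1 + y) - f₂ (1 + y) = f₁ 1 - f₂ 1 := by
    intro y hy hy1
    have T1 := key_tendsto p f₁ hf₁K hD1 hy hy1
    have T2 := key_tendsto p f₂ hf₂K hD2 hy hy1
    have Td : Tendsto (fun n : ℕ =>
        (f₁ ((n : ℝ) + y) - ∑ j ∈ range (p + 1), gbinom y j * fdiff^[j] f₁ n)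
          - (f₂ ((n : ℝ) + y) - ∑ j ∈ range (p + 1), gbinom y j * fdiff^[j] f₂ n))
        atTop (nhds 0) := by
      simpa using T1.sub T2
    have hsum : ∀ n : ℕ, 0 < n →
        (f₁ ((n : ℝ) + y) - ∑ j ∈ range (p + 1), gbinom y j * fdiff^[j] f₁ n)
          - (f₂ ((n : ℝ) + y) - ∑ j ∈ range (p + 1), gbinom y j * fdiff^[j] f₂ n)
        = (f₁ ((n : ℝ) + y) - f₂ ((n : ℝ) + y)) - (f₁ n - f₂ n) := by
      intro n hn
      have hnpos : (0 : ℝ) < n := by exact_mod_cast hn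
      have hsum2 : ∑ j ∈ range (p + 1), gbinom y j * fdiff^[j] f₁ n
          - ∑ j ∈ range (p + 1), gbinom y j * fdiff^[j] f₂ n = f₁ n - f₂ n := by
        rw [← Finset.sum_sub_distrib]
        rw [Finset.sum_eq_single 0]
        · simp [gbinom, mul_sub]
        · intro j hj hne
          obtain ⟨k, rfl⟩ := Nat.exists_eq_succ_of_ne_zero hne
          rw [fdiff_iter_succ_eq f₁ g hf₁ k hnpos, fdiff_iter_succ_eq f₂ g hf₂ k hnpos]
          ring
        · intro h
          exact absurd (mem_range.mpr (by omega)) h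
      linarith
    have hconst : ∀ n : ℕ, 1 ≤ n →
        (f₁ ((n : ℝ) + y) - f₂ ((n : ℝ) + y)) - (f₁ (n : ℝ) - f₂ (n : ℝ))
          = (f₁ (1 + y) - f₂ (1 + y)) - (f₁ 1 - f₂ 1) := by
      intro n hn
      induction n with
      | zero => omega
      | succ m ih =>
        rcases Nat.lt_or_ge 1 (m + 1) with h1 | h1
        · have hm : 1 ≤ m := by omega
          have ihm := ih hm
          have hmpos : (0 : ℝ) < m := by
            have : (1 : ℝ) ≤ (m : ℝ) := by exact_mod_cast hm
            linarith
          have p1 := hper ((m : ℝ) + y) (by linarith)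
          have p2 := hper (m : ℝ) hmpos
          have e1 : ((m + 1 : ℕ) : ℝ) + y = ((m : ℝ) + y) + 1 := by push_cast; ring
          have e2 : ((m + 1 : ℕ) : ℝ) = (m : ℝ) + 1 := by push_cast; ring
          rw [e1, e2]
          linarith
        · have : m = 0 := by omega
          subst this
          norm_num [add_comm]
    have hEq : (fun n : ℕ =>
        (f₁ ((n : ℝ) + y) - ∑ j ∈ range (p + 1), gbinom y j * fdiff^[j] f₁ n)
          - (f₂ ((n : ℝ) + y) - ∑ j ∈ range (p + 1), gbinom y j * fdiff^[j] f₂ n))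
        =ᶠ[atTop] (fun _ : ℕ => (f₁ (1 + y) - f₂ (1 + y)) - (f₁ 1 - f₂ 1)) := by
      filter_upwards [eventually_ge_atTop 1] with n hn
      rw [hsum n (by omega), hconst n hn]
    have hfinal := tendsto_nhds_unique (Td.congr' hEq) tendsto_const_nhds
    linarith
  refine ⟨f₁ 1 - f₂ 1, ?_⟩
  have step : ∀ k : ℕ, ∀ z : ℝ, 0 < z → z < (k : ℝ) + 1 → f₁ z - f₂ z = f₁ 1 - f₂ 1 := by
    intro k
    induction k with
    | zero =>
      intro z hz hz1
      norm_num at hz1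
      have hk := key z hz hz1
      have hp := hper z hz
      have e : (1 : ℝ) + z = z + 1 := by ring
      rw [e] at hk
      linarith
    | succ m ih =>
      intro z hz hz2
      by_cases h : z < (m : ℝ) + 1
      · exact ih z hz h
      · push_neg at h
        rcases eq_or_lt_of_le h with h1 | h1
        · rcases Nat.eq_zero_or_pos m with rfl | hm
          · rw [← h1]; norm_num
          · have hm1 : (1 : ℝ) ≤ (m : ℝ) := by exact_mod_cast hm
            have hz1 : (0 : ℝ) < z - 1 := by linarith
            have := ih (z - 1) hz1 (by linarith)
            have hp := hper (z - 1) hz1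
            have e : z - 1 + 1 = z := by ring
            rw [e] at hp
            linarith
        · rcases Nat.eq_zero_or_pos m with rfl | hm
          · have hz1 : (0 : ℝ) < z - 1 := by norm_num at h1; linarith
            have hz2' : z - 1 < 1 := by push_cast at hz2; linarith
            have hk := key (z - 1) hz1 hz2'
            have e : 1 + (z - 1) = z := by ring
            rw [e] at hk
            exact hk
          · have hm1 : (1 : ℝ) ≤ (m : ℝ) := by exact_mod_cast hm
            have hz1 : (0 : ℝ) < z - 1 := by linarith
            have := ih (z - 1) hz1 (by push_cast at hz2 ⊢; linarith)
            have hp := hper (z - 1) hz1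
            have e : z - 1 + 1 = z := by ring
            rw [e] at hp
            linarith
  intro z hz
  obtain ⟨k, hk⟩ : ∃ k : ℕ, z < (k : ℝ) + 1 := by
    refine ⟨⌈z⌉₊, ?_⟩
    have := Nat.le_ceil z
    linarith
  exact step k z hz hk
end

section
/- Let m, p ∈ ℕ and let f : (0,∞) → ℝ lie in D^{p+m+1} ∩ K^{p+2m+1}. Define h : (0,∞) → ℝ by h(x) = f(x) − Σ_{j=0}^{m} C(x−1, j)·Δ^j f(1). Then Δ^{m+1} h = Δ^{m+1} f on (0,∞), h(k) = 0 for k = 1,…,m+1, and Δ^k h ∈ K^{p+m} for k = 0,…,m. (Equivalently, h is the principal (m+1)-fold indefinite sum of Δ^{m+1} f, i.e., Σ^{m+1}Δ^{m+1} f(x) = ρ_1^{m+1}[f](x−1).) -/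
open Finset Filter

section Aux

lemma fdiff_sub (f g : ℝ → ℝ) :
    fdiff (fun x => f x - g x) = fun x => fdiff f x - fdiff g x := by
  funext x; simp only [fdiff]; ring

lemma fdiff_iter_sub (f g : ℝ → ℝ) (k : ℕ) :
    fdiff^[k] (fun x => f x - g x) = fun x => fdiff^[k] f x - fdiff^[k] g x := by
  induction k with
  | zero => rfl
  | succ k ih =>
    rw [Function.iterate_succ_apply' , ih, fdiff_sub,
      ← Function.iterate_succ_apply' fdiff k f, ← Function.iterate_succ_apply' fdiff k g]

lemma fdiff_neg (f : ℝ → ℝ) : fdiff (fun x => -f x) = fun x => -(fdiff f x) := by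
  funext x; simp only [fdiff]; ring

lemma fdiff_iter_neg (f : ℝ → ℝ) (k : ℕ) :
    fdiff^[k] (fun x => -f x) = fun x => -(fdiff^[k] f x) := by
  induction k with
  | zero => rfl
  | succ k ih =>
    rw [Function.iterate_succ_apply', ih, fdiff_neg, ← Function.iterate_succ_apply' fdiff k f]

lemma fdiff_iter_zero (k : ℕ) : fdiff^[k] (fun _ => (0:ℝ)) = fun _ => (0:ℝ) := by
  induction k with
  | zero => rfl
  | succ k ih => rw [Function.iterate_succ_apply', ih]; funext x; simp [fdiff]

lemma gbinom_zero (x : ℝ) : gbinom x 0 = 1 := by simp [gbinom]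

lemma gbinom_pascal (x : ℝ) (j : ℕ) :
    gbinom (x + 1) (j + 1) - gbinom x (j + 1) = gbinom x j := by
  have h1 : (∏ i ∈ Finset.range (j+1), (x + 1 - i)) = (∏ i ∈ Finset.range j, (x - i)) * (x + 1) := by
    rw [Finset.prod_range_succ']
    have h0 : x + 1 - ((0:ℕ):ℝ) = x + 1 := by norm_num
    rw [h0]
    congr 1
    apply Finset.prod_congr rfl
    intro i _
    push_cast; ring
  have h2 : (∏ i ∈ Finset.range (j+1), (x - i)) = (∏ i ∈ Finset.range j, (x - i)) * (x - j) :=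
    Finset.prod_range_succ _ _
  have h3 : (Nat.factorial (j+1) : ℝ) = (j+1) * Nat.factorial j := by
    rw [Nat.factorial_succ]; push_cast; ring
  simp only [gbinom, h1, h2, h3]
  have hj : (Nat.factorial j : ℝ) ≠ 0 := by positivity
  field_simp
  ring

lemma fdiff_gsum (c : ℕ → ℝ) (s : ℕ) :
    fdiff (fun x => ∑ j ∈ Finset.range (s+1), gbinom (x - 1) j * c j)
      = fun x => ∑ j ∈ Finset.range s, gbinom (x - 1) j * c (j+1) := by
  funext x
  simp only [fdiff]
  rw [← Finset.sum_sub_distrib, Finset.sum_range_succ']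
  have h0 : (gbinom (x + 1 - 1) 0 * c 0 - gbinom (x - 1) 0 * c 0) = 0 := by
    rw [gbinom_zero, gbinom_zero]; ring
  rw [h0, add_zero]
  apply Finset.sum_congr rfl
  intro j _
  have : x + 1 - 1 = (x - 1) + 1 := by ring
  rw [this, ← sub_mul, gbinom_pascal]

lemma fdiff_iter_gsum (k : ℕ) : ∀ (c : ℕ → ℝ) (s : ℕ),
    fdiff^[k] (fun x => ∑ j ∈ Finset.range s, gbinom (x - 1) j * c j)
      = fun x => ∑ j ∈ Finset.range (s - k), gbinom (x - 1) j * c (j + k) := by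
  induction k with
  | zero => intro c s; simp
  | succ k ih =>
    intro c s
    match s with
    | 0 => simpa using fdiff_iter_zero (k+1)
    | s + 1 =>
      rw [Function.iterate_succ_apply, fdiff_gsum, ih (fun j => c (j+1)) s]
      have hs : s + 1 - (k + 1) = s - k := by omega
      rw [hs]; rfl

lemma newton (f : ℝ → ℝ) : ∀ (n : ℕ) (x : ℝ),
    f (x + n) = ∑ j ∈ Finset.range (n+1), (n.choose j : ℝ) * fdiff^[j] f x := by
  intro n
  induction n with
  | zero => intro x; simp
  | succ n ih =>
    intro x
    have hx : x + ((n+1 : ℕ) : ℝ) = (x + 1) + n := by push_cast; ring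
    rw [hx, ih (x+1)]
    have hstep : ∀ j : ℕ, fdiff^[j] f (x + 1) = fdiff^[j] f x + fdiff^[j+1] f x := by
      intro j
      rw [Function.iterate_succ_apply']
      simp [fdiff]
    simp only [hstep]
    have expand : ∑ j ∈ Finset.range (n+1), (n.choose j : ℝ) * (fdiff^[j] f x + fdiff^[j+1] f x)
        = (∑ j ∈ Finset.range (n+1), (n.choose j : ℝ) * fdiff^[j] f x)
          + ∑ j ∈ Finset.range (n+1), (n.choose j : ℝ) * fdiff^[j+1] f x := by
      rw [← Finset.sum_add_distrib]; apply Finset.sum_congr rfl; intro j _; ring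
    rw [expand]
    have rhs : ∑ j ∈ Finset.range (n+2), ((n+1).choose j : ℝ) * fdiff^[j] f x
        = ((n+1).choose 0 : ℝ) * fdiff^[0] f x
          + ∑ j ∈ Finset.range (n+1), ((n+1).choose (j+1) : ℝ) * fdiff^[j+1] f x := by
      rw [Finset.sum_range_succ' (fun j => ((n+1).choose j : ℝ) * fdiff^[j] f x) (n+1)]
      ring
    rw [rhs]
    have pasc : ∀ j, ((n+1).choose (j+1) : ℝ) = (n.choose j : ℝ) + (n.choose (j+1) : ℝ) := by
      intro j; rw [Nat.choose_succ_succ]; push_cast; ring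
    simp only [pasc]
    have split : ∑ j ∈ Finset.range (n+1), ((n.choose j : ℝ) + (n.choose (j+1) : ℝ)) * fdiff^[j+1] f x
        = (∑ j ∈ Finset.range (n+1), (n.choose (j+1) : ℝ) * fdiff^[j+1] f x)
          + ∑ j ∈ Finset.range (n+1), (n.choose j : ℝ) * fdiff^[j+1] f x := by
      rw [← Finset.sum_add_distrib]; apply Finset.sum_congr rfl; intro j _; ring
    rw [split]
    have left : ((n+1).choose 0 : ℝ) * fdiff^[0] f x
          + ∑ j ∈ Finset.range (n+1), (n.choose (j+1) : ℝ) * fdiff^[j+1] f x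
        = ∑ j ∈ Finset.range (n+1), (n.choose j : ℝ) * fdiff^[j] f x := by
      rw [Finset.sum_range_succ' (fun j => (n.choose j : ℝ) * fdiff^[j] f x) n,
        Finset.sum_range_succ (fun j => (n.choose (j+1) : ℝ) * fdiff^[j+1] f x) n]
      simp only [Nat.choose_succ_self, Nat.cast_zero, zero_mul, add_zero,
        Nat.choose_zero_right, Nat.cast_one, one_mul, Function.iterate_zero, id_eq]
      ring
    rw [← add_assoc, left]

lemma gbinom_nat_gt (n j : ℕ) (h : n < j) : gbinom (n : ℝ) j = 0 := by
  rw [gbinom, Finset.prod_eq_zero (Finset.mem_range.mpr h) (by simp : (n:ℝ) - (n : ℕ) = 0),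
    zero_div]

lemma gbinom_nat_le (n j : ℕ) (h : j ≤ n) : gbinom (n : ℝ) j = (n.choose j : ℝ) := by
  have : (∏ i ∈ Finset.range j, ((n:ℝ) - i)) = (n.descFactorial j : ℝ) := by
    induction j with
    | zero => simp
    | succ j ihj =>
      rw [Finset.prod_range_succ, ihj (le_of_lt (Nat.lt_of_succ_le h)), Nat.descFactorial_succ]
      have : ((n - j : ℕ) : ℝ) = (n:ℝ) - j := by
        have : j ≤ n := by omega
        push_cast [this]; ring
      push_cast [Nat.cast_sub (by omega : j ≤ n)]
      ring
  rw [gbinom, this, Nat.descFactorial_eq_factorial_mul_choose]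
  have : (Nat.factorial j : ℝ) ≠ 0 := by positivity
  push_cast
  field_simp

lemma divDiff_congr {f g : ℝ → ℝ} {n : ℕ} (x : Fin n → ℝ) (h : ∀ t, f t = g t) :
    divDiff f x = divDiff g x := by
  unfold divDiff; apply Finset.sum_congr rfl; intros; rw [h]

lemma divDiff_sub (f g : ℝ → ℝ) {n : ℕ} (x : Fin n → ℝ) :
    divDiff (fun t => f t - g t) x = divDiff f x - divDiff g x := by
  unfold divDiff
  rw [← Finset.sum_sub_distrib]
  apply Finset.sum_congr rfl; intros; rw [sub_div]

lemma divDiff_neg (f : ℝ → ℝ) {n : ℕ} (x : Fin n → ℝ) :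
    divDiff (fun t => -f t) x = -divDiff f x := by
  unfold divDiff
  rw [← Finset.sum_neg_distrib]
  apply Finset.sum_congr rfl; intros; rw [neg_div]

lemma divDiff_const_mul (c : ℝ) (f : ℝ → ℝ) {n : ℕ} (x : Fin n → ℝ) :
    divDiff (fun t => c * f t) x = c * divDiff f x := by
  unfold divDiff
  rw [Finset.mul_sum]
  apply Finset.sum_congr rfl; intros; rw [mul_div_assoc]

lemma univ_erase_perm {n : ℕ} (σ : Equiv.Perm (Fin n)) (i : Fin n) :
    (Finset.univ.erase i).map σ.toEmbedding = Finset.univ.erase (σ i) := by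
  rw [Finset.map_erase]
  congr 1
  exact Finset.map_univ_equiv σ

lemma divDiff_comp_perm (f : ℝ → ℝ) {n : ℕ} (x : Fin n → ℝ) (σ : Equiv.Perm (Fin n)) :
    divDiff f (x ∘ σ) = divDiff f x := by
  unfold divDiff
  rw [← Equiv.sum_comp σ (fun i => f (x i) / ∏ j ∈ Finset.univ.erase i, (x i - x j))]
  apply Finset.sum_congr rfl
  intro i _
  simp only [Function.comp_apply]
  congr 1
  rw [← univ_erase_perm σ i, Finset.prod_map]
  rfl

lemma univ_erase_eq_map {n : ℕ} (i : Fin (n+1)) :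
    Finset.univ.erase i = Finset.univ.map (i.succAboveEmb) := by
  ext j
  simp only [Finset.mem_erase, Finset.mem_univ, and_true, Finset.mem_map, Fin.succAboveEmb_apply]
  simp only [true_and]
  exact (Fin.exists_succAbove_eq_iff).symm

lemma prod_erase_succAbove {n : ℕ} (g : Fin (n+1) → ℝ) (i : Fin (n+1)) :
    ∏ k ∈ Finset.univ.erase i, g k = ∏ k : Fin n, g (i.succAbove k) := by
  rw [univ_erase_eq_map, Finset.prod_map]; rfl

lemma sum_erase_succAbove {n : ℕ} (g : Fin (n+1) → ℝ) (i : Fin (n+1)) :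
    ∑ k ∈ Finset.univ.erase i, g k = ∑ k : Fin n, g (i.succAbove k) := by
  rw [univ_erase_eq_map, Finset.sum_map]; rfl

lemma double_erase {n : ℕ} (i : Fin (n+1)) (j : Fin n) :
    (Finset.univ.erase (i.succAbove j)).erase i = (Finset.univ.erase j).map (i.succAboveEmb) := by
  rw [Finset.erase_right_comm, Finset.map_erase, ← univ_erase_eq_map]
  rfl

lemma prod_double_erase {n : ℕ} (g : Fin (n+1) → ℝ) (i : Fin (n+1)) (j : Fin n) :
    ∏ k ∈ (Finset.univ.erase (i.succAbove j)).erase i, g k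
      = ∏ k ∈ Finset.univ.erase j, g (i.succAbove k) := by
  rw [double_erase, Finset.prod_map]; rfl

/-- Expansion of a divided difference splitting off the point at index `i`. -/
lemma divDiff_split {n : ℕ} (f : ℝ → ℝ) (w : Fin (n+1) → ℝ) (i : Fin (n+1)) :
    divDiff f w = f (w i) / ∏ k : Fin n, (w i - w (i.succAbove k))
      + ∑ k : Fin n, f (w (i.succAbove k))
          / ((w (i.succAbove k) - w i)
            * ∏ l ∈ Finset.univ.erase k, (w (i.succAbove k) - w (i.succAbove l))) := by
  unfold divDiff
  rw [Fin.sum_univ_succAbove (fun J => f (w J) / ∏ K ∈ Finset.univ.erase J, (w J - w K)) i]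
  congr 1
  · rw [prod_erase_succAbove (fun K => w i - w K) i]
  · apply Finset.sum_congr rfl
    intro k _
    congr 1
    rw [← Finset.mul_prod_erase (Finset.univ.erase (i.succAbove k))
        (fun K => w (i.succAbove k) - w K)
        (Finset.mem_erase.mpr ⟨(Fin.succAbove_ne i k).symm, Finset.mem_univ i⟩),
      prod_double_erase (fun K => w (i.succAbove k) - w K) i k]

lemma divDiff_update (f : ℝ → ℝ) {n : ℕ} (v : Fin (n+1) → ℝ) (hv : Function.Injective v)
    (i : Fin (n+1)) (b : ℝ) (hb : ∀ j, b ≠ v j) :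
    divDiff f (Function.update v i b) - divDiff f v
      = (b - v i) * divDiff f (Fin.cons b v) := by
  set A := i.succAbove with hA
  set P1 := ∏ k : Fin n, (b - v (A k)) with hP1def
  set P2 := ∏ k : Fin n, (v i - v (A k)) with hP2def
  set Q := fun k : Fin n => ∏ l ∈ Finset.univ.erase k, (v (A k) - v (A l)) with hQdef
  have hAne : ∀ k, A k ≠ i := fun k => Fin.succAbove_ne i k
  have hbvi : b - v i ≠ 0 := sub_ne_zero.mpr (hb i)
  have hcb : ∀ k, v (A k) - b ≠ 0 := fun k => sub_ne_zero.mpr (fun e => hb (A k) e.symm)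
  have hcvi : ∀ k, v (A k) - v i ≠ 0 := fun k => sub_ne_zero.mpr (fun e => hAne k (hv e))
  have hP1 : P1 ≠ 0 := Finset.prod_ne_zero_iff.mpr (fun k _ => sub_ne_zero.mpr (hb (A k)))
  have hP2 : P2 ≠ 0 := Finset.prod_ne_zero_iff.mpr
    (fun k _ => sub_ne_zero.mpr (fun e => (hAne k) (hv e.symm)))
  have hQ : ∀ k, Q k ≠ 0 := by
    intro k
    apply Finset.prod_ne_zero_iff.mpr
    intro l hl
    have : A k ≠ A l := fun e =>
      (Finset.mem_erase.mp hl).1 (Fin.succAbove_right_injective e).symm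
    exact sub_ne_zero.mpr (fun e => this (hv e))
  -- expansion of divDiff f (update v i b)
  have hupd : ∀ k, Function.update v i b (A k) = v (A k) :=
    fun k => Function.update_of_ne (hAne k) _ _
  have exp1 : divDiff f (Function.update v i b)
      = f b / P1 + ∑ k : Fin n, f (v (A k)) / ((v (A k) - b) * Q k) := by
    rw [divDiff_split f _ i]
    simp only [Function.update_self, hupd, ← hA]
    rfl
  have exp2 : divDiff f v
      = f (v i) / P2 + ∑ k : Fin n, f (v (A k)) / ((v (A k) - v i) * Q k) :=
    divDiff_split f v i
  -- expansion of divDiff f (cons b v)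
  have exp3 : divDiff f (Fin.cons b v)
      = f b / ((b - v i) * P1) + f (v i) / ((v i - b) * P2)
        + ∑ k : Fin n, f (v (A k)) / ((v (A k) - b) * ((v (A k) - v i) * Q k)) := by
    rw [divDiff_split f _ 0]
    simp only [Fin.cons_zero, Fin.zero_succAbove, Fin.cons_succ]
    rw [Fin.prod_univ_succAbove (fun k => b - v k) i,
      Fin.sum_univ_succAbove
        (fun k => f (v k) / ((v k - b) * ∏ l ∈ Finset.univ.erase k, (v k - v l))) i]
    rw [prod_erase_succAbove (fun l => v i - v l) i]
    have inner : ∀ k : Fin n,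
        (∏ l ∈ Finset.univ.erase (A k), (v (A k) - v l)) = (v (A k) - v i) * Q k := by
      intro k
      rw [← Finset.mul_prod_erase (Finset.univ.erase (A k)) (fun l => v (A k) - v l)
        (Finset.mem_erase.mpr ⟨Ne.symm (hAne k), Finset.mem_univ i⟩),
        prod_double_erase (fun l => v (A k) - v l) i k]
    simp only [inner, ← hA, ← hP1def, ← hP2def]
    ring
  rw [exp1, exp2, exp3, mul_add, mul_add]
  have hvib : v i - b ≠ 0 := fun e => hbvi (by linarith [sub_eq_zero.mp e])
  have c1 : (b - v i) * (f b / ((b - v i) * P1)) = f b / P1 := by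
    field_simp
  have c2 : (b - v i) * (f (v i) / ((v i - b) * P2)) = -(f (v i) / P2) := by
    field_simp
    ring
  have c3 : (b - v i) * (∑ k : Fin n, f (v (A k)) / ((v (A k) - b) * ((v (A k) - v i) * Q k)))
      = (∑ k : Fin n, f (v (A k)) / ((v (A k) - b) * Q k))
        - ∑ k : Fin n, f (v (A k)) / ((v (A k) - v i) * Q k) := by
    rw [Finset.mul_sum, ← Finset.sum_sub_distrib]
    apply Finset.sum_congr rfl
    intro k _
    rw [div_sub_div _ _ (mul_ne_zero (hcb k) (hQ k)) (mul_ne_zero (hcvi k) (hQ k)),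
      mul_div_assoc']
    rw [div_eq_div_iff
      (mul_ne_zero (hcb k) (mul_ne_zero (hcvi k) (hQ k)))
      (mul_ne_zero (mul_ne_zero (hcb k) (hQ k)) (mul_ne_zero (hcvi k) (hQ k)))]
    ring
  rw [c1, c2, c3]
  ring

/-- Removal lemma: dividing out a root removes a node. -/
lemma divDiff_removal {n : ℕ} (g : ℝ → ℝ) (w : Fin (n+1) → ℝ)
    (hw : Function.Injective w) (i : Fin (n+1)) :
    divDiff (fun x => (x - w i) * g x) w = divDiff g (w ∘ i.succAbove) := by
  rw [divDiff_split (fun x => (x - w i) * g x) w i]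
  have h0 : (w i - w i) * g (w i) = 0 := by ring
  rw [h0, zero_div, zero_add]
  unfold divDiff
  apply Finset.sum_congr rfl
  intro k _
  have hne : w (i.succAbove k) - w i ≠ 0 :=
    sub_ne_zero.mpr (fun e => Fin.succAbove_ne i k (hw e))
  rw [show (w (i.succAbove k) - w i) * g (w (i.succAbove k))
      / ((w (i.succAbove k) - w i)
        * ∏ l ∈ Finset.univ.erase k, (w (i.succAbove k) - w (i.succAbove l)))
    = g (w (i.succAbove k))
      / ∏ l ∈ Finset.univ.erase k, (w (i.succAbove k) - w (i.succAbove l)) from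
    mul_div_mul_left _ _ hne]
  rfl

lemma divDiff_poly : ∀ (n : ℕ) (P : Polynomial ℝ), P.natDegree ≤ n →
    ∀ w : Fin (n+2) → ℝ, Function.Injective w → divDiff (fun x => P.eval x) w = 0 := by
  intro n
  induction n with
  | zero =>
    intro P hP w hw
    obtain ⟨c, rfl⟩ : ∃ c, P = Polynomial.C c :=
      ⟨P.coeff 0, Polynomial.eq_C_of_natDegree_le_zero hP⟩
    rw [divDiff_split (fun x => (Polynomial.C c).eval x) w 0]
    have h01 : w 0 - w (Fin.succAbove 0 0) ≠ 0 :=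
      sub_ne_zero.mpr (fun e => Fin.succAbove_ne 0 0 (hw e).symm)
    simp only [Polynomial.eval_C]
    rw [Fin.prod_univ_one, Fin.sum_univ_one]
    have : (Finset.univ.erase (0 : Fin 1)) = ∅ := by decide
    rw [this, Finset.prod_empty, mul_one]
    have ha : w 0 - w 1 ≠ 0 := sub_ne_zero.mpr (fun e => absurd (hw e) (by decide))
    have hb : w 1 - w 0 ≠ 0 := sub_ne_zero.mpr (fun e => absurd (hw e) (by decide))
    have h02 : w (Fin.succAbove 0 0) - w 0 ≠ 0 := fun e => h01 (by linarith)
    rw [div_add_div _ _ h01 h02, div_eq_zero_iff]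
    left
    ring
  | succ n ih =>
    intro P hP w hw
    -- constants vanish
    have hconst : ∀ c : ℝ, divDiff (fun _ => c) w = 0 := by
      intro c
      have h01 : w 1 - w 0 ≠ 0 := sub_ne_zero.mpr (fun e => by
        have : (1 : Fin (n+3)) = 0 := hw e
        simp at this)
      have hrepr : ∀ t : ℝ, c = (c / (w 1 - w 0)) * ((t - w 0) * 1 - (t - w 1) * 1) := by
        intro t; field_simp; ring
      rw [divDiff_congr w (f := fun _ => c)
        (g := fun t => (c / (w 1 - w 0)) * ((t - w 0) * 1 - (t - w 1) * 1)) hrepr,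
        divDiff_const_mul,
        divDiff_sub (fun t => (t - w 0) * 1) (fun t => (t - w 1) * 1),
        divDiff_removal (fun _ => (1:ℝ)) w hw 0,
        divDiff_removal (fun _ => (1:ℝ)) w hw 1]
      have e1 : divDiff (fun _ => (1:ℝ)) (w ∘ Fin.succAbove 0) = 0 := by
        have := ih (Polynomial.C 1) (by simp) (w ∘ Fin.succAbove 0)
          (hw.comp (Fin.succAbove_right_injective))
        rw [divDiff_congr _ (f := fun _ => (1:ℝ)) (g := fun x => (Polynomial.C (1:ℝ)).eval x)
          (by simp)]
        exact this
      have e2 : divDiff (fun _ => (1:ℝ)) (w ∘ Fin.succAbove 1) = 0 := by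
        have := ih (Polynomial.C 1) (by simp) (w ∘ Fin.succAbove 1)
          (hw.comp (Fin.succAbove_right_injective))
        rw [divDiff_congr _ (f := fun _ => (1:ℝ)) (g := fun x => (Polynomial.C (1:ℝ)).eval x)
          (by simp)]
        exact this
      rw [e1, e2]
      ring
    obtain ⟨Q, hQ⟩ := Polynomial.X_sub_C_dvd_sub_C_eval (a := w 0) (p := P)
    have hQdeg : Q.natDegree ≤ n := by
      by_cases hQ0 : Q = 0
      · simp [hQ0]
      · have h1 : (P - Polynomial.C (P.eval (w 0))).natDegree ≤ n + 1 := by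
          apply le_trans (Polynomial.natDegree_sub_le _ _)
          simp [hP]
        rw [hQ, Polynomial.natDegree_mul (Polynomial.X_sub_C_ne_zero (w 0)) hQ0,
          Polynomial.natDegree_X_sub_C] at h1
        omega
    have heval : ∀ t : ℝ, P.eval t = P.eval (w 0) + (t - w 0) * Q.eval t := by
      intro t
      have := congrArg (Polynomial.eval t) hQ
      simp at this
      linarith
    rw [divDiff_congr w heval]
    have : divDiff (fun t => P.eval (w 0) + (t - w 0) * Q.eval t) w
        = divDiff (fun _ => P.eval (w 0)) w + divDiff (fun t => (t - w 0) * Q.eval t) w := by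
      unfold divDiff
      rw [← Finset.sum_add_distrib]
      apply Finset.sum_congr rfl; intros; rw [add_div]
    rw [this, hconst, divDiff_removal (fun t => Q.eval t) w hw 0,
      ih Q hQdeg (w ∘ Fin.succAbove 0) (hw.comp (Fin.succAbove_right_injective))]
    ring

lemma divDiff_gsum_zero (c : ℕ → ℝ) (s n : ℕ) (hs : s ≤ n + 1) (w : Fin (n+2) → ℝ)
    (hw : Function.Injective w) :
    divDiff (fun x => ∑ j ∈ Finset.range s, gbinom (x - 1) j * c j) w = 0 := by
  set P : Polynomial ℝ := ∑ j ∈ Finset.range s,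
    Polynomial.C (c j / (Nat.factorial j))
      * ∏ i ∈ Finset.range j, (Polynomial.X - Polynomial.C ((i : ℝ) + 1)) with hPdef
  have hdeg : P.natDegree ≤ n := by
    apply Polynomial.natDegree_sum_le_of_forall_le
    intro j hj
    apply le_trans (Polynomial.natDegree_C_mul_le _ _)
    apply le_trans (Polynomial.natDegree_prod_le _ _)
    have : ∀ i ∈ Finset.range j, (Polynomial.X - Polynomial.C ((i : ℝ) + 1)).natDegree = 1 := by
      intro i _; exact Polynomial.natDegree_X_sub_C _
    rw [Finset.sum_congr rfl this, Finset.sum_const, Finset.card_range, smul_eq_mul, mul_one]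
    have := Finset.mem_range.mp hj
    omega
  have he : ∀ t : ℝ, (∑ j ∈ Finset.range s, gbinom (t - 1) j * c j) = P.eval t := by
    intro t
    rw [hPdef, Polynomial.eval_finset_sum]
    apply Finset.sum_congr rfl
    intro j _
    rw [Polynomial.eval_mul, Polynomial.eval_C, Polynomial.eval_prod]
    have : ∀ i ∈ Finset.range j,
        ((Polynomial.X - Polynomial.C ((i : ℝ) + 1)).eval t) = (t - 1) - i := by
      intro i _; simp; ring
    rw [Finset.prod_congr rfl this]
    rw [gbinom]
    ring
  rw [divDiff_congr w he]
  exact divDiff_poly n P hdeg w hw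

noncomputable def rotPerm (n : ℕ) : Equiv.Perm (Fin (n+1)) :=
  Equiv.ofBijective (Fin.cons (Fin.last n) Fin.castSucc) (by
    apply Finite.injective_iff_bijective.mp
    apply Fin.cons_injective_of_injective
    · rintro ⟨k, hk⟩
      exact absurd hk (Fin.castSucc_lt_last k).ne
    · exact Fin.castSucc_injective n)

lemma rotPerm_zero (n : ℕ) : rotPerm n 0 = Fin.last n := rfl

lemma rotPerm_succ (n : ℕ) (j : Fin n) : rotPerm n j.succ = j.castSucc := by
  show (Fin.cons (Fin.last n) Fin.castSucc : Fin (n+1) → Fin (n+1)) j.succ = j.castSucc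
  rw [Fin.cons_succ]

lemma divDiff_consecutive (f : ℝ → ℝ) : ∀ (n : ℕ) (x : ℝ),
    divDiff f (fun i : Fin (n+1) => x + i) = fdiff^[n] f x / (Nat.factorial n) := by
  intro n
  induction n with
  | zero =>
    intro x
    unfold divDiff
    rw [Fin.sum_univ_one]
    have h0 : (Finset.univ.erase (0 : Fin 1)) = ∅ := by decide
    rw [h0, Finset.prod_empty]
    simp
  | succ n ih =>
    intro x
    set v : Fin (n+1) → ℝ := fun i => x + i with hvdef
    have hvinj : Function.Injective v := by
      intro a b hab
      have : (a : ℝ) = (b : ℝ) := by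
        simpa [hvdef] using hab
      exact Fin.ext (by exact_mod_cast this)
    have hb : ∀ j : Fin (n+1), x + ((n : ℝ) + 1) ≠ v j := by
      intro j e
      have h1 : ((n : ℝ) + 1) = (j : ℕ) := by
        simpa [hvdef] using e
      have : (j : ℕ) < n + 1 := j.isLt
      have : ((j : ℕ) : ℝ) < (n : ℝ) + 1 := by exact_mod_cast this
      linarith [h1]
    have key := divDiff_update f v hvinj 0 (x + ((n : ℝ) + 1)) hb
    have e1 : Function.update v 0 (x + ((n : ℝ) + 1))
        = (fun i : Fin (n+1) => (x + 1) + i) ∘ (rotPerm n) := by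
      funext j
      refine Fin.cases ?_ ?_ j
      · rw [Function.update_self]
        simp only [Function.comp_apply, rotPerm_zero, Fin.val_last]
        ring
      · intro k
        rw [Function.update_of_ne (Fin.succ_ne_zero k)]
        simp only [Function.comp_apply, rotPerm_succ, Fin.coe_castSucc, hvdef, Fin.val_succ]
        push_cast
        ring
    have e2 : Fin.cons (x + ((n : ℝ) + 1)) v
        = (fun i : Fin (n+2) => x + i) ∘ (rotPerm (n+1)) := by
      funext j
      refine Fin.cases ?_ ?_ j
      · rw [Fin.cons_zero]
        simp only [Function.comp_apply, rotPerm_zero, Fin.val_last]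
        push_cast
        ring
      · intro k
        rw [Fin.cons_succ]
        simp only [Function.comp_apply, rotPerm_succ, Fin.coe_castSucc, hvdef]
    rw [e1, e2, divDiff_comp_perm, divDiff_comp_perm] at key
    have hv0 : v 0 = x := by simp [hvdef]
    rw [hv0, ih (x + 1)] at key
    have hvIh : divDiff f v = fdiff^[n] f x / (Nat.factorial n) := ih x
    rw [hvIh] at key
    -- key : A/n! - B/n! = (x + (n+1) - x) * D
    have hcoef : x + ((n : ℝ) + 1) - x = (n : ℝ) + 1 := by ring
    rw [hcoef] at key
    have hfacn : ((Nat.factorial n : ℕ) : ℝ) ≠ 0 := by positivity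
    have hn1 : ((n : ℝ) + 1) ≠ 0 := by positivity
    have hstep : fdiff^[n+1] f x = fdiff^[n] f (x + 1) - fdiff^[n] f x := by
      rw [Function.iterate_succ_apply']
      rfl
    have hfac : ((Nat.factorial (n+1) : ℕ) : ℝ) = ((n : ℝ) + 1) * (Nat.factorial n : ℕ) := by
      rw [Nat.factorial_succ]; push_cast; ring
    rw [eq_div_iff (by rw [hfac]; positivity), hfac, hstep]
    field_simp at key
    linarith [key]

lemma convexOrderOn_congr {f g : ℝ → ℝ} {p : ℕ} {S : Set ℝ} (h : ∀ x, f x = g x)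
    (hf : ConvexOrderOn f p S) : ConvexOrderOn g p S := by
  intro u hu hinj
  rw [← divDiff_congr u h]
  exact hf u hu hinj

lemma convexOrderOn_of_sorted {f : ℝ → ℝ} {p : ℕ} {S : Set ℝ}
    (h : ∀ x : Fin (p+2) → ℝ, (∀ i, x i ∈ S) → StrictMono x → 0 ≤ divDiff f x) :
    ConvexOrderOn f p S := by
  intro u hu hinj
  have hmono := Tuple.monotone_sort u
  have hsm : StrictMono (u ∘ Tuple.sort u) :=
    hmono.strictMono_of_injective (hinj.comp (Equiv.injective _))
  have := h (u ∘ Tuple.sort u) (fun i => hu _) hsm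
  rwa [divDiff_comp_perm] at this

lemma divDiff_shift (f : ℝ → ℝ) {n : ℕ} (x : Fin n → ℝ) :
    divDiff (fun t => f (t + 1)) x = divDiff f (fun i => x i + 1) := by
  unfold divDiff
  apply Finset.sum_congr rfl
  intro i _
  congr 1
  apply Finset.prod_congr rfl
  intro j _
  ring

lemma deltaK_core {f : ℝ → ℝ} {q : ℕ} {a : ℝ}
    (hf : ConvexOrderOn f (q+1) (Set.Ioi a)) :
    ConvexOrderOn (fdiff f) q (Set.Ioi a) := by
  apply convexOrderOn_of_sorted
  intro u hu hsm
  set B : ℕ → Fin (q+2) → ℝ := fun k j => if (j : ℕ) < k then u j else u j + 1 with hB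
  have hB0 : B 0 = fun j => u j + 1 := by funext j; simp [hB]
  have hBtop : B (q+2) = u := by funext j; simp [hB, j.isLt]
  have hBinj : ∀ k, Function.Injective (B k) := by
    intro k
    have main : ∀ a' b' : Fin (q+2), a' < b' → B k a' ≠ B k b' := by
      intro a' b' hlt
      have hu' : u a' < u b' := hsm hlt
      have hab : (a' : ℕ) < (b' : ℕ) := hlt
      simp only [hB]
      by_cases hak : (a' : ℕ) < k <;> by_cases hbk : (b' : ℕ) < k <;>
        simp only [hak, hbk, if_true, if_false, if_pos, if_neg] <;> intro he
      · exact absurd he (ne_of_lt hu')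
      · linarith
      · omega
      · linarith
    intro a' b' he
    rcases lt_trichotomy a' b' with hlt | heq | hlt
    · exact absurd he (main a' b' hlt)
    · exact heq
    · exact absurd he.symm (main b' a' hlt)
  have hstep : ∀ k : ℕ, (hk : k < q + 2) →
      0 ≤ divDiff f (B k) - divDiff f (B (k+1)) := by
    intro k hk
    set K : Fin (q+2) := ⟨k, hk⟩ with hKdef
    have hKval : (K : ℕ) = k := rfl
    have hBk1K : B (k+1) K = u K := by simp [hB, hKval]
    have hbnotin : ∀ j, u K + 1 ≠ B (k+1) j := by
      intro j he
      by_cases hj : (j : ℕ) < k + 1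
      · simp only [hB, if_pos hj] at he
        have hjK : j ≤ K := by
          apply Fin.le_def.mpr; omega
        have : u j ≤ u K := hsm.monotone hjK
        linarith
      · simp only [hB, if_neg hj] at he
        have : u K = u j := by linarith
        have hjK : j = K := (hsm.injective this.symm)
        apply hj
        rw [hjK]; omega
    have hupdate : B k = Function.update (B (k+1)) K (u K + 1) := by
      funext j
      by_cases hj : j = K
      · subst hj
        rw [Function.update_self]
        simp [hB, hKval]
      · rw [Function.update_of_ne hj]
        have : (j : ℕ) ≠ k := fun e => hj (Fin.ext (by rw [e, hKval]))
        simp only [hB]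
        have : ((j:ℕ) < k) ↔ ((j:ℕ) < k + 1) := by omega
        by_cases hc : (j:ℕ) < k
        · rw [if_pos hc, if_pos (by omega)]
        · rw [if_neg hc, if_neg (by omega)]
    have key := divDiff_update f (B (k+1)) (hBinj (k+1)) K (u K + 1) hbnotin
    rw [← hupdate, hBk1K] at key
    have hcoef : u K + 1 - u K = 1 := by ring
    rw [hcoef, one_mul] at key
    rw [key]
    apply hf
    · intro i
      refine Fin.cases ?_ ?_ i
      · rw [Fin.cons_zero]
        have := hu K
        simp only [Set.mem_Ioi] at *
        linarith
      · intro j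
        rw [Fin.cons_succ]
        by_cases hj : (j : ℕ) < k + 1 <;> simp only [hB, if_pos, if_neg, hj, if_true, if_false]
        · exact hu j
        · have := hu j
          simp only [Set.mem_Ioi] at *
          linarith
    · apply Fin.cons_injective_of_injective
      · rintro ⟨j, hj⟩
        exact hbnotin j hj.symm
      · exact hBinj (k+1)
  have expand : divDiff (fdiff f) u = divDiff f (B 0) - divDiff f (B (q+2)) := by
    rw [hB0, hBtop]
    rw [divDiff_congr u (f := fdiff f) (g := fun t => f (t+1) - f t) (fun t => rfl)]
    rw [divDiff_sub (fun t => f (t+1)) f u, divDiff_shift]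
  rw [expand]
  have tele : divDiff f (B 0) - divDiff f (B (q+2))
      = ∑ k ∈ Finset.range (q+2), (divDiff f (B k) - divDiff f (B (k+1))) := by
    rw [Finset.sum_range_sub' (fun k => divDiff f (B k)) (q+2)]
  rw [tele]
  apply Finset.sum_nonneg
  intro k hk
  exact hstep k (Finset.mem_range.mp hk)

lemma fdiff_iter_succ_eval (f : ℝ → ℝ) (q : ℕ) (x : ℝ) :
    fdiff^[q+1] f x = fdiff^[q] f (x + 1) - fdiff^[q] f x := by
  rw [Function.iterate_succ_apply']
  rfl

lemma fdiff_iter_nonneg_of_convex {f : ℝ → ℝ} {q : ℕ} {a : ℝ}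
    (hf : ConvexOrderOn f (q+1) (Set.Ioi a)) {x : ℝ} (hx : a < x) :
    0 ≤ fdiff^[q+2] f x := by
  have hcons := divDiff_consecutive f (q+2) x
  have hpos : 0 ≤ divDiff f (fun i : Fin (q+3) => x + i) := by
    apply hf
    · intro i
      simp only [Set.mem_Ioi]
      have : (0:ℝ) ≤ (i : ℕ) := by positivity
      linarith
    · intro i j he
      have : ((i : ℕ) : ℝ) = ((j : ℕ) : ℝ) := by
        simpa using he
      exact Fin.ext (by exact_mod_cast this)
  rw [hcons] at hpos
  have hfac : (0:ℝ) < (Nat.factorial (q+2) : ℝ) := by positivity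
  calc (0:ℝ) = 0 * (Nat.factorial (q+2) : ℝ) := by ring
  _ ≤ (fdiff^[q+2] f x / (Nat.factorial (q+2) : ℝ)) * (Nat.factorial (q+2) : ℝ) := by
      apply mul_le_mul_of_nonneg_right hpos (le_of_lt hfac)
  _ = fdiff^[q+2] f x := by field_simp

lemma low_core {f : ℝ → ℝ} {q : ℕ} {a : ℝ}
    (hf : ConvexOrderOn f (q+1) (Set.Ioi a)) (hd : DD (q+1) f) :
    ConvexOrderOn (fun x => -f x) q (Set.Ioi a) := by
  intro u hu hinj
  rw [divDiff_neg]
  suffices hle : divDiff f u ≤ 0 by linarith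
  obtain ⟨M, hM⟩ := exists_nat_gt (max a ((Finset.univ : Finset (Fin (q+2))).sup'
      ⟨0, Finset.mem_univ 0⟩ u))
  have hMa : a < (M : ℝ) := lt_of_le_of_lt (le_max_left _ _) hM
  have hMu : ∀ j, u j < (M : ℝ) := fun j =>
    lt_of_le_of_lt (le_trans (Finset.le_sup' u (Finset.mem_univ j)) (le_max_right _ _)) hM
  -- the monotone tail sequence
  set g : ℕ → ℝ := fun t => fdiff^[q+1] f ((t + M : ℕ) : ℝ) with hg
  have hgmono : Monotone g := by
    apply monotone_nat_of_le_succ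
    intro t
    have hstep : g (t+1) - g t = fdiff^[q+2] f ((t + M : ℕ) : ℝ) := by
      simp only [hg]
      rw [fdiff_iter_succ_eval f (q+1) ((t + M : ℕ) : ℝ)]
      push_cast
      ring_nf
    have hnn : 0 ≤ fdiff^[q+2] f ((t + M : ℕ) : ℝ) := by
      apply fdiff_iter_nonneg_of_convex hf
      have : (M:ℝ) ≤ ((t + M : ℕ) : ℝ) := by push_cast; linarith [Nat.cast_nonneg (α := ℝ) t]
      linarith
    linarith
  have hgtend : Filter.Tendsto g Filter.atTop (nhds 0) :=
    hd.comp (Filter.tendsto_add_atTop_nat M)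
  have hgle : ∀ t, g t ≤ 0 := fun t => hgmono.ge_of_tendsto hgtend t
  -- the moving tuples
  set U : ℕ → Fin (q+2) → ℝ := fun k j => if (j : ℕ) < k then u j else ((M : ℝ) + j) with hU
  have hU0 : U 0 = fun j : Fin (q+2) => (M : ℝ) + j := by funext j; simp [hU]
  have hUtop : U (q+2) = u := by funext j; simp [hU, j.isLt]
  have hUinj : ∀ k, Function.Injective (U k) := by
    intro k a' b' he
    by_cases ha : (a' : ℕ) < k <;> by_cases hb : (b' : ℕ) < k <;>
      simp only [hU, ha, hb, if_true, if_false, if_pos, if_neg] at he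
    · exact hinj he
    · exfalso
      have : (0:ℝ) ≤ ((b' : ℕ) : ℝ) := by positivity
      have := hMu a'
      linarith
    · exfalso
      have : (0:ℝ) ≤ ((a' : ℕ) : ℝ) := by positivity
      have := hMu b'
      linarith
    · have : ((a' : ℕ) : ℝ) = ((b' : ℕ) : ℝ) := by linarith
      exact Fin.ext (by exact_mod_cast this)
  have hUmem : ∀ k j, U k j ∈ Set.Ioi a := by
    intro k j
    by_cases hj : (j : ℕ) < k <;> simp only [hU, hj, if_true, if_false, if_pos, if_neg]
    · exact hu j
    · simp only [Set.mem_Ioi]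
      have : (0:ℝ) ≤ ((j : ℕ) : ℝ) := by positivity
      linarith
  have hchain : ∀ k, k ≤ q + 2 → divDiff f (U k) ≤ divDiff f (U 0) := by
    intro k
    induction k with
    | zero => intro _; exact le_refl _
    | succ k ih =>
      intro hk
      have hk' : k < q + 2 := by omega
      set K : Fin (q+2) := ⟨k, hk'⟩ with hKdef
      have hKval : (K : ℕ) = k := rfl
      have hUk1K : U (k+1) K = u K := by simp [hU, hKval]
      have hbnotin : ∀ j, (M : ℝ) + k ≠ U (k+1) j := by
        intro j he
        by_cases hj : (j : ℕ) < k + 1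
        · simp only [hU, if_pos hj] at he
          have := hMu j
          have : (0:ℝ) ≤ (k : ℝ) := by positivity
          linarith
        · simp only [hU, if_neg hj] at he
          have : ((k:ℕ) : ℝ) = ((j : ℕ) : ℝ) := by linarith
          have : k = (j : ℕ) := by exact_mod_cast this
          omega
      have hupdate : U k = Function.update (U (k+1)) K ((M : ℝ) + k) := by
        funext j
        by_cases hj : j = K
        · subst hj
          rw [Function.update_self]
          simp [hU, hKval]
        · rw [Function.update_of_ne hj]
          have hne : (j : ℕ) ≠ k := fun e => hj (Fin.ext (by rw [e, hKval]))
          simp only [hU]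
          by_cases hc : (j:ℕ) < k
          · rw [if_pos hc, if_pos (by omega)]
          · rw [if_neg hc, if_neg (by omega)]
      have key := divDiff_update f (U (k+1)) (hUinj (k+1)) K ((M : ℝ) + k) hbnotin
      rw [← hupdate, hUk1K] at key
      have hstep : divDiff f (U (k+1)) ≤ divDiff f (U k) := by
        have hcoefpos : 0 ≤ (M : ℝ) + k - u K := by
          have := hMu K
          have : (0:ℝ) ≤ (k : ℝ) := by positivity
          linarith
        have hdpos : 0 ≤ divDiff f (Fin.cons ((M : ℝ) + k) (U (k+1))) := by
          apply hf
          · intro i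
            refine Fin.cases ?_ ?_ i
            · rw [Fin.cons_zero]
              simp only [Set.mem_Ioi]
              have : (0:ℝ) ≤ (k : ℝ) := by positivity
              linarith
            · intro j
              rw [Fin.cons_succ]
              exact hUmem (k+1) j
          · apply Fin.cons_injective_of_injective
            · rintro ⟨j, hj⟩
              exact hbnotin j hj.symm
            · exact hUinj (k+1)
        nlinarith [key]
      exact le_trans hstep (ih (by omega))
  have hfinal : divDiff f u ≤ divDiff f (U 0) := by
    rw [← hUtop]
    exact hchain (q+2) (le_refl _)
  have hU0val : divDiff f (U 0) = fdiff^[q+1] f (M : ℝ) / (Nat.factorial (q+1) : ℝ) := by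
    rw [hU0]
    exact divDiff_consecutive f (q+1) (M : ℝ)
  have hg0 : g 0 = fdiff^[q+1] f (M : ℝ) := by simp [hg]
  have : fdiff^[q+1] f (M : ℝ) ≤ 0 := by rw [← hg0]; exact hgle 0
  have hfacpos : (0:ℝ) < (Nat.factorial (q+1) : ℝ) := by positivity
  have : divDiff f (U 0) ≤ 0 := by
    rw [hU0val]
    exact div_nonpos_of_nonpos_of_nonneg this (le_of_lt hfacpos)
  linarith

lemma fdiff_iter_neg' (f : ℝ → ℝ) (k : ℕ) :
    fdiff^[k] (fun x => -f x) = fun x => -(fdiff^[k] f x) := by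
  induction k with
  | zero => rfl
  | succ k ih =>
    rw [Function.iterate_succ_apply', ih]
    funext x
    rw [Function.iterate_succ_apply']
    simp only [fdiff]
    ring

lemma DD_neg {q : ℕ} {f : ℝ → ℝ} (hd : DD q f) : DD q (fun x => -f x) := by
  unfold DD at *
  rw [fdiff_iter_neg']
  simpa using hd.neg

lemma DD_succ {q : ℕ} {f : ℝ → ℝ} (hd : DD q f) : DD (q+1) f := by
  unfold DD at *
  have h1 : Filter.Tendsto (fun n : ℕ => fdiff^[q] f ((n + 1 : ℕ) : ℝ))
      Filter.atTop (nhds 0) := hd.comp (Filter.tendsto_add_atTop_nat 1)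
  have : (fun n : ℕ => fdiff^[q+1] f (n : ℝ))
      = fun n : ℕ => fdiff^[q] f ((n + 1 : ℕ) : ℝ) - fdiff^[q] f (n : ℝ) := by
    funext n
    rw [fdiff_iter_succ_eval]
    push_cast
    ring_nf
  rw [this]
  simpa using h1.sub hd

lemma DD_mono {q r : ℕ} {f : ℝ → ℝ} (hd : DD q f) (h : q ≤ r) : DD r f := by
  induction r with
  | zero => simpa [Nat.le_zero.mp h] using hd
  | succ r ih =>
    by_cases hr : q = r + 1
    · subst hr; exact hd
    · exact DD_succ (ih (by omega))

lemma DD_iter {d k : ℕ} {f : ℝ → ℝ} (hd : DD (d + k) f) : DD d (fdiff^[k] f) := by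
  unfold DD at *
  have : fdiff^[d] (fdiff^[k] f) = fdiff^[d + k] f := (Function.iterate_add_apply fdiff d k f).symm
  rw [this]
  exact hd

lemma EvK_low {q : ℕ} {f : ℝ → ℝ} (hk : EvK (q+1) f) (hd : DD (q+1) f) : EvK q f := by
  rcases hk with ⟨a, ha, hconv⟩ | ⟨a, ha, hconc⟩
  · right
    exact ⟨a, ha, low_core hconv hd⟩
  · left
    refine ⟨a, ha, ?_⟩
    have := low_core hconc (DD_neg hd)
    exact convexOrderOn_congr (fun x => by ring) this

lemma EvK_delta {q : ℕ} {f : ℝ → ℝ} (hk : EvK (q+1) f) : EvK q (fdiff f) := by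
  rcases hk with ⟨a, ha, hconv⟩ | ⟨a, ha, hconc⟩
  · exact Or.inl ⟨a, ha, deltaK_core hconv⟩
  · refine Or.inr ⟨a, ha, ?_⟩
    have := deltaK_core hconc
    exact convexOrderOn_congr (fun t => by simp only [fdiff]; ring) this

lemma EvK_delta_iter {k : ℕ} : ∀ {q : ℕ} {f : ℝ → ℝ}, EvK (q + k) f → EvK q (fdiff^[k] f) := by
  induction k with
  | zero => intro q f hk; simpa using hk
  | succ k ih =>
    intro q f hk
    rw [Function.iterate_succ_apply']
    apply EvK_delta
    exact ih (by rw [show q + 1 + k = q + (k+1) by omega]; exact hk)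

lemma EvK_low_iter {j : ℕ} : ∀ {d : ℕ} {f : ℝ → ℝ}, EvK (d + j) f → DD (d+1) f → EvK d f := by
  induction j with
  | zero => intro d f hk _; simpa using hk
  | succ j ih =>
    intro d f hk hd
    apply ih (d := d) ?_ hd
    have : d + j + 1 = d + (j + 1) := by omega
    exact EvK_low (by rw [this]; exact hk) (DD_mono hd (by omega))

lemma EvK_sub_vanishing {q : ℕ} {F G : ℝ → ℝ} (hk : EvK q F)
    (hG : ∀ w : Fin (q+2) → ℝ, Function.Injective w → divDiff G w = 0) :
    EvK q (fun x => F x - G x) := by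
  rcases hk with ⟨a, ha, hconv⟩ | ⟨a, ha, hconc⟩
  · left
    refine ⟨a, ha, ?_⟩
    intro u hu hinj
    rw [divDiff_sub F G u, hG u hinj, sub_zero]
    exact hconv u hu hinj
  · right
    refine ⟨a, ha, ?_⟩
    intro u hu hinj
    have h1 : divDiff (fun x => -(F x - G x)) u
        = divDiff (fun x => (fun y => -F y) x - (fun y => -G y) x) u :=
      divDiff_congr u (fun t => by ring)
    rw [h1, divDiff_sub (fun y => -F y) (fun y => -G y) u, divDiff_neg G u, hG u hinj,
      neg_zero, sub_zero]
    exact hconc u hu hinj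

end Aux

/-- `Σ^{m+1} Δ^{m+1} f (x) = ρ₁^{m+1}[f](x-1)`: the function
`h x = f x - ∑_{j=0}^m C(x-1,j) Δ^j f(1)` is the principal `(m+1)`-fold
indefinite sum of `Δ^{m+1} f`. -/
theorem stmt_5 (m p : ℕ) (f : ℝ → ℝ)
    (hfD : DD (p + m + 1) f) (hfK : EvK (p + 2 * m + 1) f)
    (h : ℝ → ℝ)
    (hh : ∀ x : ℝ, h x =
      f x - ∑ j ∈ Finset.range (m + 1), gbinom (x - 1) j * (fdiff^[j] f) 1) :
    (∀ x > (0 : ℝ), fdiff^[m + 1] h x = fdiff^[m + 1] f x) ∧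
    (∀ k ∈ Finset.Icc 1 (m + 1), h k = 0) ∧
    (∀ k ≤ m, EvK (p + m) (fdiff^[k] h)) := by
  set c : ℕ → ℝ := fun j => (fdiff^[j] f) 1 with hc
  set S : ℝ → ℝ := fun y => ∑ j ∈ Finset.range (m + 1), gbinom (y - 1) j * c j with hSdef
  have hfun : h = fun x => f x - S x := funext hh
  have hIter : ∀ k : ℕ, fdiff^[k] h = fun x => fdiff^[k] f x - fdiff^[k] S x := by
    intro k
    rw [hfun, fdiff_iter_sub]
  have hSiter : ∀ k : ℕ, fdiff^[k] S
      = fun x => ∑ j ∈ Finset.range (m + 1 - k), gbinom (x - 1) j * c (j + k) := by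
    intro k
    rw [hSdef]
    exact fdiff_iter_gsum k c (m + 1)
  refine ⟨?_, ?_, ?_⟩
  · -- part 1
    intro x _
    rw [hIter (m+1), hSiter (m+1)]
    simp
  · -- part 2
    intro k hk
    obtain ⟨hk1, hk2⟩ := Finset.mem_Icc.mp hk
    obtain ⟨n, rfl⟩ : ∃ n, k = n + 1 := ⟨k - 1, by omega⟩
    have hnm : n ≤ m := by omega
    rw [hh]
    have hcast : ((n + 1 : ℕ) : ℝ) - 1 = (n : ℝ) := by push_cast; ring
    have hsum : ∑ j ∈ Finset.range (m + 1), gbinom (((n + 1 : ℕ) : ℝ) - 1) j * c j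
        = ∑ j ∈ Finset.range (n + 1), (n.choose j : ℝ) * c j := by
      rw [hcast]
      rw [← Finset.sum_subset (Finset.range_subset_range.mpr (by omega : n + 1 ≤ m + 1))
        (fun j _ hj => by
          have hnj : n < j := by
            have : ¬ j < n + 1 := fun hcon => hj (Finset.mem_range.mpr hcon)
            omega
          rw [gbinom_nat_gt n j hnj, zero_mul])]
      apply Finset.sum_congr rfl
      intro j hj
      have hjn : j ≤ n := by
        have := Finset.mem_range.mp hj
        omega
      rw [gbinom_nat_le n j hjn]
    rw [hsum]
    have hfval : f ((n + 1 : ℕ) : ℝ) = ∑ j ∈ Finset.range (n + 1), (n.choose j : ℝ) * c j := by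
      have hc2 : ((n + 1 : ℕ) : ℝ) = 1 + (n : ℝ) := by push_cast; ring
      rw [hc2]
      exact newton f n 1
    rw [hfval, sub_self]
  · -- part 3
    intro k hk
    have hKf : EvK ((p + m) + (m + 1 - k)) (fdiff^[k] f) := by
      apply EvK_delta_iter
      have he : (p + m) + (m + 1 - k) + k = p + 2 * m + 1 := by omega
      rw [he]
      exact hfK
    have hDg : DD ((p + m) + 1) (fdiff^[k] f) := by
      apply DD_iter (d := p + m + 1)
      exact DD_mono hfD (by omega)
    have hKg : EvK (p + m) (fdiff^[k] f) := EvK_low_iter hKf hDg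
    rw [hIter k, hSiter k]
    apply EvK_sub_vanishing hKg
    intro w hw
    exact divDiff_gsum_zero (fun j => c (j + k)) (m + 1 - k) (p + m) (by omega) w hw
end

section
/- Let m, q ∈ ℕ and let g : (0,∞) → ℝ be any function. Then Σ_{k=1}^{q} C(m+q−k, m)·g(k) = Σ_{k=1}^{q} C(m+q, m+k)·Δ^{k−1} g(1), where Δ^{k−1} g(1) = Σ_{i=0}^{k−1} C(k−1, i)·(−1)^{k−1−i}·g(1+i). -/
open Finset Filter

lemma conv_aux (n : ℕ) : ∀ r s : ℕ,
    ∑ j ∈ range (n+1), (n - j).choose r * j.choose s = (n+1).choose (r+s+1) := by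
  induction n with
  | zero =>
    intro r s
    cases r <;> cases s <;> simp [Nat.choose]
  | succ n ih =>
    intro r s
    rw [Finset.sum_range_succ]
    cases r with
    | zero =>
      have h : ∀ j ∈ range (n+1), (n + 1 - j).choose 0 * j.choose s
          = (n - j).choose 0 * j.choose s := by
        intro j hj; simp
      rw [Finset.sum_congr rfl h, ih 0 s]
      simp [Nat.choose_succ_succ' (n+1) s, Nat.sub_self]
      omega
    | succ r =>
      have h : ∀ j ∈ range (n+1), (n + 1 - j).choose (r+1) * j.choose s
          = (n - j).choose r * j.choose s + (n - j).choose (r+1) * j.choose s := by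
        intro j hj
        simp only [Finset.mem_range] at hj
        have h2 : n + 1 - j = (n - j) + 1 := by omega
        rw [h2, Nat.choose_succ_succ', Nat.add_mul]
      rw [Finset.sum_congr rfl h, Finset.sum_add_distrib, ih r s, ih (r+1) s]
      have : (n+1-(n+1)).choose (r+1) = 0 := by simp
      rw [this, Nat.zero_mul, Nat.add_zero]
      have : r + 1 + s + 1 = (r + s + 1) + 1 := by omega
      rw [this, Nat.choose_succ_succ' (n+1) (r+s+1)]

lemma alt_real (n : ℕ) :
    ∑ t ∈ range (n+1), ((-1 : ℝ))^t * (n.choose t : ℝ) = if n = 0 then 1 else 0 := by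
  have h := Int.alternating_sum_range_choose (n := n)
  have h2 : ((∑ t ∈ range (n+1), ((-1)^t * (n.choose t : ℤ)) : ℤ) : ℝ)
      = ∑ t ∈ range (n+1), ((-1 : ℝ))^t * (n.choose t : ℝ) := by push_cast; rfl
  rw [← h2, h]
  split <;> simp

lemma van_aux (m q i : ℕ) (hi : i < q) :
    ∑ j ∈ Ico i q, (m + q - (1+j)).choose m * j.choose i = (m+q).choose (m+i+1) := by
  have hq : 1 ≤ q := by omega
  have hsub : Ico i q ⊆ range (m + q) := by
    intro j hj; simp only [Finset.mem_Ico, Finset.mem_range] at *; omega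
  rw [Finset.sum_subset hsub ?_]
  · have hn : m + q = (m + q - 1) + 1 := by omega
    have hc := conv_aux (m + q - 1) m i
    rw [← hn] at hc
    rw [← hc]
    apply Finset.sum_congr rfl
    intro j hj
    congr 2
    omega
  · intro j hj hj2
    simp only [Finset.mem_range, Finset.mem_Ico, not_and, not_lt] at hj hj2
    by_cases hji : i ≤ j
    · have hjq : q ≤ j := hj2 hji
      have hlt : m + q - (1+j) < m := by omega
      rw [Nat.choose_eq_zero_of_lt hlt, Nat.zero_mul]
    · have hz : j.choose i = 0 := Nat.choose_eq_zero_of_lt (by omega)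
      rw [hz, Nat.mul_zero]

/-- `∑_{k=1}^q C(m+q-k, m) g(k) = ∑_{k=1}^q C(m+q, m+k) Δ^{k-1} g(1)`. -/
theorem stmt_9 (m q : ℕ) (g : ℝ → ℝ) :
    (∑ k ∈ Finset.Icc 1 q, ((m + q - k).choose m : ℝ) * g k) =
      ∑ k ∈ Finset.Icc 1 q, ((m + q).choose (m + k) : ℝ) *
        ∑ i ∈ Finset.range k, ((k - 1).choose i : ℝ) * (-1) ^ (k - 1 - i) * g (1 + i) := by
  set D : ℕ → ℝ := fun j => ∑ l ∈ range (j+1), ((j.choose l : ℝ)) * (-1)^(j-l) * g (1+l) with hD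
  -- binomial inversion
  have hinv : ∀ j : ℕ, ∑ i ∈ range (j+1), (j.choose i : ℝ) * D i = g (1 + j) := by
    intro j
    simp only [hD, Finset.mul_sum]
    rw [Finset.sum_comm' (t' := range (j+1)) (s' := fun l => Ico l (j+1))
      (by intro x y; simp only [Finset.mem_range, Finset.mem_Ico]; omega)]
    have key : ∀ l ∈ range (j+1),
        (∑ i ∈ Ico l (j+1), (j.choose i : ℝ) * ((i.choose l : ℝ) * (-1)^(i-l) * g (1+l)))
        = if l = j then g (1 + (l:ℝ)) else 0 := by
      intro l hl
      simp only [Finset.mem_range] at hl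
      rw [Finset.sum_Ico_eq_sum_range]
      have hrange : j + 1 - l = (j - l) + 1 := by omega
      rw [hrange]
      have hterm : ∀ t ∈ range ((j-l)+1),
          (j.choose (l+t) : ℝ) * (((l+t).choose l : ℝ) * (-1)^((l+t)-l) * g (1+l))
          = ((j.choose l : ℝ) * g (1+l)) * ((-1)^t * ((j-l).choose t : ℝ)) := by
        intro t ht
        simp only [Finset.mem_range] at ht
        have h1 : l + t ≤ j := by omega
        have h2 : l ≤ l + t := by omega
        have h3 : j.choose (l+t) * (l+t).choose l = j.choose l * (j - l).choose (l + t - l) :=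
          Nat.choose_mul h2
        have h4 : l + t - l = t := by omega
        rw [h4] at h3
        have h5 : ((j.choose (l+t) : ℝ)) * ((l+t).choose l : ℝ)
            = (j.choose l : ℝ) * ((j-l).choose t : ℝ) := by exact_mod_cast congrArg Nat.cast h3
        rw [h4]
        linear_combination ((-1:ℝ))^t * g (1+(l:ℝ)) * h5
      rw [Finset.sum_congr rfl hterm, ← Finset.mul_sum, alt_real (j-l)]
      by_cases hlj : l = j
      · simp [hlj]
      · rw [if_neg (by omega), if_neg hlj, mul_zero]
    rw [Finset.sum_congr rfl key, Finset.sum_ite_eq' (range (j+1)) j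
      (fun l => g (1 + (l:ℝ)))]
    simp
  -- rewrite both sides as sums over range q
  have hIcc : Finset.Icc 1 q = Finset.Ico 1 (q+1) := by rfl
  rw [hIcc, Finset.sum_Ico_eq_sum_range, Finset.sum_Ico_eq_sum_range]
  simp only [Nat.add_sub_cancel, Nat.cast_add, Nat.cast_one]
  trans (∑ i ∈ range q, ((m+q).choose (m+i+1) : ℝ) * D i)
  · -- LHS = middle
    have step1 : ∀ j ∈ range q, ((m + q - (1+j)).choose m : ℝ) * g (1 + (j:ℝ))
        = ∑ i ∈ range (j+1), ((m + q - (1+j)).choose m : ℝ) * ((j.choose i : ℝ) * D i) := by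
      intro j hj
      rw [← Finset.mul_sum, hinv j]
    rw [Finset.sum_congr rfl step1,
      Finset.sum_comm' (t' := range q) (s' := fun i => Ico i q)
        (by intro x y; simp only [Finset.mem_range, Finset.mem_Ico]; omega)]
    apply Finset.sum_congr rfl
    intro i hi
    simp only [Finset.mem_range] at hi
    have hv := van_aux m q i hi
    have hcast : ∑ j ∈ Ico i q, ((m + q - (1+j)).choose m : ℝ) * (j.choose i : ℝ)
        = ((m+q).choose (m+i+1) : ℝ) := by exact_mod_cast congrArg Nat.cast hv
    calc ∑ j ∈ Ico i q, ((m + q - (1+j)).choose m : ℝ) * ((j.choose i : ℝ) * D i)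
        = (∑ j ∈ Ico i q, ((m + q - (1+j)).choose m : ℝ) * (j.choose i : ℝ)) * D i := by
          rw [Finset.sum_mul]; exact Finset.sum_congr rfl fun j hj => by ring
      _ = ((m+q).choose (m+i+1) : ℝ) * D i := by rw [hcast]
  · -- middle = RHS
    apply Finset.sum_congr rfl
    intro j hj
    have h1 : (1+j) - 1 = j := by omega
    have h2 : m + (1+j) = m + j + 1 := by omega
    rw [h1, h2, show 1 + j = j + 1 from by omega]
end
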